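/- arXiv:1812.01277 — 9 statements merged into one kernel-verified Lean document; each statement's English description precedes it below -/
import Mathlib

section
/- Consider the algebraic equilibrium equations of the sex-structured entomological model: a pair (M,F) of nonnegative reals is an equilibrium iff rρF e^{−β(M+F)} = μ_M M and (1−r)ρF e^{−β(M+F)} = μ_F F. Then: (i) if N_F < 1, the only nonnegative solution is (M,F) = (0,0); (ii) if N_F > 1, there is exactly one solution with M > 0 and F > 0, namely F* = (N_F/(N_F+N_M))·(1/β)·ln N_F and M* = (N_M/(N_F+N_M))·(1/β)·ln N_F. -/
/-- Basic offspring number for females. -/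
noncomputable def NF (r ρ μF : ℝ) : ℝ := (1 - r) * ρ / μF

/-- Basic offspring number for males. -/
noncomputable def NM (r ρ μM : ℝ) : ℝ := r * ρ / μM

/-- Equilibrium equations of the sex-structured entomological model. -/
def isEquil (r ρ β μM μF M F : ℝ) : Prop :=
  r * ρ * F * Real.exp (-(β * (M + F))) = μM * M ∧
  (1 - r) * ρ * F * Real.exp (-(β * (M + F))) = μF * F

/-!
At an equilibrium with `F ≠ 0` the female equation says that the survival factor
`exp (-β (M + F))` equals `1 / N_F`, i.e. `β (M + F) = log N_F`; in particular `N_F ≥ 1`.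
Substituting this into the male equation gives `N_M F = N_F M`, so the total `(log N_F) / β`
is split between the sexes in the ratio `N_M : N_F`.
-/

open Real

lemma eq_div_add_mul_of_mul_eq_mul {a b x y s : ℝ} (hab : a + b ≠ 0) (hxy : a * y = b * x)
    (hs : x + y = s) : x = a / (a + b) * s ∧ y = b / (a + b) * s := by
  subst hs
  constructor
  · field_simp
    linear_combination -hxy
  · field_simp
    linear_combination hxy

section Equilibria

variable {r ρ β μM μF M F : ℝ}

namespace isEquil

lemma left_eq_zero (hμM : μM ≠ 0) (h : isEquil r ρ β μM μF M 0) : M = 0 := by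
  have : μM * M = 0 := by simpa using h.1.symm
  exact (mul_eq_zero.mp this).resolve_left hμM

lemma NF_eq_exp (hμF : μF ≠ 0) (hF : F ≠ 0) (h : isEquil r ρ β μM μF M F) :
    NF r ρ μF = exp (β * (M + F)) := by
  have hsurv : (1 - r) * ρ * exp (-(β * (M + F))) = μF :=
    mul_right_cancel₀ hF (by linear_combination h.2)
  have hexp : exp (β * (M + F)) * exp (-(β * (M + F))) = 1 := by simp [← exp_add]
  rw [NF, div_eq_iff hμF, ← hsurv]
  linear_combination -(1 - r) * ρ * hexp

lemma NM_mul_eq_NF_mul (hμM : μM ≠ 0) (hμF : μF ≠ 0) (hF : F ≠ 0)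
    (h : isEquil r ρ β μM μF M F) : NM r ρ μM * F = NF r ρ μF * M := by
  have hexp : exp (β * (M + F)) * exp (-(β * (M + F))) = 1 := by simp [← exp_add]
  rw [h.NF_eq_exp hμF hF, NM]
  field_simp
  linear_combination exp (β * (M + F)) * h.1 - r * ρ * F * hexp

end isEquil

lemma isEquil_of_log_NF (hμM : μM ≠ 0) (hμF : μF ≠ 0) (hNF : 0 < NF r ρ μF)
    (hsum : β * (M + F) = log (NF r ρ μF)) (hratio : NM r ρ μM * F = NF r ρ μF * M) :
    isEquil r ρ β μM μF M F := by
  have hsurv : exp (-(β * (M + F))) = (NF r ρ μF)⁻¹ := by rw [hsum, exp_neg, exp_log hNF]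
  have hfem : (1 - r) * ρ = μF * NF r ρ μF := by rw [NF, mul_div_cancel₀ _ hμF]
  have hmale : r * ρ = μM * NM r ρ μM := by rw [NM, mul_div_cancel₀ _ hμM]
  rw [isEquil, hsurv, hfem, hmale]
  constructor
  · field_simp
    linear_combination hratio
  · field_simp

end Equilibria

theorem stmt_0_general (r ρ β μM μF : ℝ)
    (hr0 : 0 < r) (hρ : 0 < ρ) (hβ : 0 < β)
    (hμM : 0 < μM) (hμF : 0 < μF) :
    (NF r ρ μF < 1 →
      ∀ M F : ℝ, 0 ≤ M → 0 ≤ F → isEquil r ρ β μM μF M F → M = 0 ∧ F = 0) ∧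
    (1 < NF r ρ μF →
      (∃! p : ℝ × ℝ, 0 < p.1 ∧ 0 < p.2 ∧ isEquil r ρ β μM μF p.1 p.2) ∧
      ∀ M F : ℝ, 0 < M → 0 < F → isEquil r ρ β μM μF M F →
        M = NM r ρ μM / (NF r ρ μF + NM r ρ μM) * (1 / β) * Real.log (NF r ρ μF) ∧
        F = NF r ρ μF / (NF r ρ μF + NM r ρ μM) * (1 / β) * Real.log (NF r ρ μF)) := by
  refine ⟨fun hNF M F hM hF h => ?_, fun hNF => ?_⟩
  · obtain rfl : F = 0 := by
      by_contra hF0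
      have := one_le_exp (by positivity : 0 ≤ β * (M + F))
      linarith [h.NF_eq_exp hμF.ne' hF0]
    exact ⟨h.left_eq_zero hμM.ne', rfl⟩
  have hNF0 : 0 < NF r ρ μF := by linarith
  have hNM0 : 0 < NM r ρ μM := by unfold NM; positivity
  have hlog : 0 < log (NF r ρ μF) := log_pos hNF
  have hsplit : ∀ M F : ℝ, 0 < M → 0 < F → isEquil r ρ β μM μF M F →
      M = NM r ρ μM / (NF r ρ μF + NM r ρ μM) * (1 / β) * log (NF r ρ μF) ∧
      F = NF r ρ μF / (NF r ρ μF + NM r ρ μM) * (1 / β) * log (NF r ρ μF) := by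
    intro M F _ hF h
    have hsum : M + F = 1 / β * log (NF r ρ μF) := by
      rw [h.NF_eq_exp hμF.ne' hF.ne', log_exp]
      field_simp
    simpa only [mul_assoc, add_comm] using eq_div_add_mul_of_mul_eq_mul (by positivity)
      (h.NM_mul_eq_NF_mul hμM.ne' hμF.ne' hF.ne') hsum
  refine ⟨⟨(_, _), ⟨by positivity, by positivity, isEquil_of_log_NF hμM.ne' hμF.ne' hNF0 ?_ ?_⟩,
    fun p ⟨hM, hF, h⟩ => Prod.ext (hsplit _ _ hM hF h).1 (hsplit _ _ hM hF h).2⟩, hsplit⟩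
  · field_simp
    ring
  · ring

theorem stmt_0 (r ρ β μM μF : ℝ)
    (hr0 : 0 < r) (hr1 : r < 1) (hρ : 0 < ρ) (hβ : 0 < β)
    (hμM : 0 < μM) (hμF : 0 < μF) :
    (NF r ρ μF < 1 →
      ∀ M F : ℝ, 0 ≤ M → 0 ≤ F → isEquil r ρ β μM μF M F → M = 0 ∧ F = 0) ∧
    (1 < NF r ρ μF →
      (∃! p : ℝ × ℝ, 0 < p.1 ∧ 0 < p.2 ∧ isEquil r ρ β μM μF p.1 p.2) ∧
      ∀ M F : ℝ, 0 < M → 0 < F → isEquil r ρ β μM μF M F →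
        M = NM r ρ μM / (NF r ρ μF + NM r ρ μM) * (1 / β) * Real.log (NF r ρ μF) ∧
        F = NF r ρ μF / (NF r ρ μF + NM r ρ μM) * (1 / β) * Real.log (NF r ρ μF)) :=
  stmt_0_general r ρ β μM μF hr0 hρ hβ hμM hμF
end

section
/- Assume N_F < 1. Then every solution of the entomological model with nonnegative initial data converges to the mosquito-free equilibrium (0,0) as t → +∞; that is, if M, F : [0,∞) → ℝ are continuously differentiable, nonnegative, and satisfy M'(t) = rρF(t)e^{−β(M(t)+F(t))} − μ_M M(t) and F'(t) = (1−r)ρF(t)e^{−β(M(t)+F(t))} − μ_F F(t) for all t ≥ 0, then M(t) → 0 and F(t) → 0 as t → +∞. -/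
set_option maxHeartbeats 1000000

/-- A function with nonpositive derivative on `(0,∞)` and differentiable on `[0,∞)`
is bounded by its value at `0`. -/
lemma aux_anti {f f' : ℝ → ℝ} (hf : ∀ t, 0 ≤ t → HasDerivAt f (f' t) t)
    (h0 : ∀ t, 0 < t → f' t ≤ 0) : ∀ t, 0 ≤ t → f t ≤ f 0 := by
  have hA : AntitoneOn f (Set.Ici (0 : ℝ)) := by
    apply antitoneOn_of_hasDerivWithinAt_nonpos (convex_Ici 0)
    · exact fun x hx => (hf x hx).continuousAt.continuousWithinAt
    · intro x hx
      rw [interior_Ici] at hx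
      exact (hf x (le_of_lt hx)).hasDerivWithinAt
    · intro x hx
      rw [interior_Ici] at hx
      exact h0 x hx
  intro t ht
  exact hA (Set.self_mem_Ici) ht ht

theorem stmt_1 (r ρ β μM μF : ℝ)
    (hr0 : 0 < r) (hr1 : r < 1) (hρ : 0 < ρ) (hβ : 0 < β)
    (hμM : 0 < μM) (hμF : 0 < μF) (hμ : μF ≤ μM)
    (hNF : (1 - r) * ρ / μF < 1)
    (M F : ℝ → ℝ)
    (hMnn : ∀ t, 0 ≤ t → 0 ≤ M t) (hFnn : ∀ t, 0 ≤ t → 0 ≤ F t)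
    (hdM : ∀ t, 0 ≤ t →
      HasDerivAt M (r * ρ * F t * Real.exp (-(β * (M t + F t))) - μM * M t) t)
    (hdF : ∀ t, 0 ≤ t →
      HasDerivAt F ((1 - r) * ρ * F t * Real.exp (-(β * (M t + F t))) - μF * F t) t) :
    Filter.Tendsto M Filter.atTop (nhds 0) ∧ Filter.Tendsto F Filter.atTop (nhds 0) := by
  -- basic constants
  obtain ⟨c, hc, hc_def⟩ : ∃ c : ℝ, 0 < c ∧ c = μF - (1 - r) * ρ := by
    refine ⟨μF - (1 - r) * ρ, ?_, rfl⟩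
    have : (1 - r) * ρ < μF := by
      have := (div_lt_one hμF).mp hNF
      linarith
    linarith
  obtain ⟨ε, hε, hεc, hεμ⟩ : ∃ ε : ℝ, 0 < ε ∧ ε ≤ c ∧ ε < μM := by
    refine ⟨min c μM / 2, by positivity, ?_, ?_⟩
    · have := min_le_left c μM; linarith
    · have := min_le_right c μM; linarith
  have hexp_le : ∀ t, 0 ≤ t → Real.exp (-(β * (M t + F t))) ≤ 1 := by
    intro t ht
    apply Real.exp_le_one_iff.mpr
    have h1 := hMnn t ht; have h2 := hFnn t ht
    nlinarith
  -- Step 1 : F t ≤ F 0 * exp (-(c*t))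
  have hgd : ∀ t, 0 ≤ t → HasDerivAt (fun t => F t * Real.exp (c * t))
      (((1 - r) * ρ * F t * Real.exp (-(β * (M t + F t))) - μF * F t) * Real.exp (c * t)
        + F t * (Real.exp (c * t) * (c * 1))) t := by
    intro t ht
    exact (hdF t ht).mul (((hasDerivAt_id t).const_mul c).exp)
  have hFbound : ∀ t, 0 ≤ t → F t ≤ F 0 * Real.exp (-(c * t)) := by
    have key : ∀ t, 0 ≤ t → F t * Real.exp (c * t) ≤ F 0 * Real.exp (c * 0) := by
      apply aux_anti hgd
      intro t ht
      have h1 := hFnn t ht.le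
      have h2 := hexp_le t ht.le
      have h3 : (0:ℝ) < Real.exp (c * t) := Real.exp_pos _
      have hx : (0:ℝ) ≤ (1 - r) * ρ * F t :=
        mul_nonneg (mul_nonneg (by linarith) hρ.le) h1
      have h5 : (1 - r) * ρ * F t * Real.exp (-(β * (M t + F t))) ≤ (1 - r) * ρ * F t :=
        mul_le_of_le_one_right hx h2
      have hcoef : (1 - r) * ρ * F t * Real.exp (-(β * (M t + F t))) - μF * F t + F t * c ≤ 0 := by
        rw [hc_def]; nlinarith
      nlinarith
    intro t ht
    have hkey := key t ht
    rw [mul_zero, Real.exp_zero, mul_one] at hkey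
    have h3 : (0:ℝ) < Real.exp (c * t) := Real.exp_pos _
    rw [Real.exp_neg, ← div_eq_mul_inv, le_div_iff₀ h3]
    exact hkey
  -- Step 2 : M t ≤ M 0 * exp (-(μM*t)) + A * exp (-(ε*t))
  obtain ⟨K, hK, hK_def⟩ : ∃ K : ℝ, 0 ≤ K ∧ K = r * ρ * F 0 := by
    refine ⟨r * ρ * F 0, ?_, rfl⟩
    have := hFnn 0 le_rfl
    positivity
  obtain ⟨A, hA, hAeq⟩ : ∃ A : ℝ, 0 ≤ A ∧ A * (μM - ε) = K := by
    refine ⟨K / (μM - ε), div_nonneg hK (by linarith), ?_⟩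
    exact div_mul_cancel₀ K (by linarith)
  have hφd : ∀ t, 0 ≤ t → HasDerivAt
      (fun t => M t * Real.exp (μM * t) - A * Real.exp ((μM - ε) * t))
      ((r * ρ * F t * Real.exp (-(β * (M t + F t))) - μM * M t) * Real.exp (μM * t)
        + M t * (Real.exp (μM * t) * (μM * 1))
        - A * (Real.exp ((μM - ε) * t) * ((μM - ε) * 1))) t := by
    intro t ht
    exact ((hdM t ht).mul (((hasDerivAt_id t).const_mul μM).exp)).sub
      ((((hasDerivAt_id t).const_mul (μM - ε)).exp).const_mul A)
  have hMbound : ∀ t, 0 ≤ t →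
      M t ≤ M 0 * Real.exp (-(μM * t)) + A * Real.exp (-(ε * t)) := by
    have key : ∀ t, 0 ≤ t →
        M t * Real.exp (μM * t) - A * Real.exp ((μM - ε) * t)
          ≤ M 0 * Real.exp (μM * 0) - A * Real.exp ((μM - ε) * 0) := by
      apply aux_anti hφd
      intro t ht
      have h1 := hFnn t ht.le
      have h1' := hMnn t ht.le
      have h2 := hexp_le t ht.le
      have h3 : (0:ℝ) < Real.exp (μM * t) := Real.exp_pos _
      have h5 : (0:ℝ) < Real.exp ((μM - ε) * t) := Real.exp_pos _
      -- r ρ F t exp(-..) exp(μM t) ≤ K exp((μM - ε) t)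
      have hF2 : F t ≤ F 0 * Real.exp (-(ε * t)) := by
        refine (hFbound t ht.le).trans ?_
        have hF0 := hFnn 0 le_rfl
        apply mul_le_mul_of_nonneg_left _ hF0
        apply Real.exp_le_exp.mpr
        nlinarith
      have hKey : r * ρ * F t * Real.exp (μM * t) ≤ K * Real.exp ((μM - ε) * t) := by
        have hrw : Real.exp ((μM - ε) * t) = Real.exp (-(ε * t)) * Real.exp (μM * t) := by
          rw [← Real.exp_add]; ring_nf
        rw [hrw, hK_def]
        have h6 : r * ρ * F t ≤ r * ρ * (F 0 * Real.exp (-(ε * t))) := by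
          apply mul_le_mul_of_nonneg_left hF2; positivity
        nlinarith
      have hx : (0:ℝ) ≤ r * ρ * F t * Real.exp (μM * t) := by positivity
      have hineq : r * ρ * F t * Real.exp (μM * t) * Real.exp (-(β * (M t + F t)))
          ≤ r * ρ * F t * Real.exp (μM * t) := mul_le_of_le_one_right hx h2
      have h9 : K * Real.exp ((μM - ε) * t)
          = A * (Real.exp ((μM - ε) * t) * ((μM - ε) * 1)) := by
        rw [← hAeq]; ring
      have h10 : (r * ρ * F t * Real.exp (-(β * (M t + F t))) - μM * M t) * Real.exp (μM * t)
            + M t * (Real.exp (μM * t) * (μM * 1))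
          = r * ρ * F t * Real.exp (μM * t) * Real.exp (-(β * (M t + F t))) := by ring
      rw [h10]
      linarith
    intro t ht
    have h := key t ht
    simp only [mul_zero, Real.exp_zero, mul_one] at h
    -- h : M t * exp(μM t) - A * exp((μM-ε) t) ≤ M 0 - A
    have h3 : (0:ℝ) < Real.exp (μM * t) := Real.exp_pos _
    have h6 : Real.exp ((μM - ε) * t) * Real.exp (-(μM * t)) = Real.exp (-(ε * t)) := by
      rw [← Real.exp_add]; ring_nf
    have h7 : Real.exp (μM * t) * Real.exp (-(μM * t)) = 1 := by
      rw [← Real.exp_add]; ring_nf; exact Real.exp_zero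
    have h8 : (0:ℝ) < Real.exp (-(μM * t)) := Real.exp_pos _
    have h9 := mul_le_mul_of_nonneg_right h h8.le
    calc M t = M t * (Real.exp (μM * t) * Real.exp (-(μM * t))) := by rw [h7]; ring
      _ = (M t * Real.exp (μM * t) - A * Real.exp ((μM - ε) * t)) * Real.exp (-(μM * t))
            + A * (Real.exp ((μM - ε) * t) * Real.exp (-(μM * t))) := by ring
      _ ≤ (M 0 - A) * Real.exp (-(μM * t)) + A * Real.exp (-(ε * t)) := by
          rw [h6]; nlinarith
      _ ≤ M 0 * Real.exp (-(μM * t)) + A * Real.exp (-(ε * t)) := by nlinarith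
  -- Step 3 : convergence
  have hdecay : ∀ a : ℝ, 0 < a →
      Filter.Tendsto (fun t => Real.exp (-(a * t))) Filter.atTop (nhds 0) := by
    intro a ha
    exact Real.tendsto_exp_neg_atTop_nhds_zero.comp
      (Filter.Tendsto.const_mul_atTop ha Filter.tendsto_id)
  constructor
  · apply squeeze_zero' (g := fun t => M 0 * Real.exp (-(μM * t)) + A * Real.exp (-(ε * t)))
    · filter_upwards [Filter.eventually_ge_atTop (0:ℝ)] with t ht using hMnn t ht
    · filter_upwards [Filter.eventually_ge_atTop (0:ℝ)] with t ht using hMbound t ht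
    · have h1 := (hdecay μM hμM).const_mul (M 0)
      have h2 := (hdecay ε hε).const_mul A
      simpa using h1.add h2
  · apply squeeze_zero' (g := fun t => F 0 * Real.exp (-(c * t)))
    · filter_upwards [Filter.eventually_ge_atTop (0:ℝ)] with t ht using hFnn t ht
    · filter_upwards [Filter.eventually_ge_atTop (0:ℝ)] with t ht using hFbound t ht
    · simpa using (hdecay c hc).const_mul (F 0)
end

section
/- Assume N_F > 1. Then every solution of the entomological model with M(0) ≥ 0 and F(0) > 0 converges as t → +∞ to the unique positive equilibrium (M*, F*), where F* = (N_F/(N_F+N_M))·(1/β)·ln N_F and M* = (N_M/(N_F+N_M))·(1/β)·ln N_F. -/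
/-!
The combination `w = (1 - r) M - r F` kills the birth terms: `w' = -μM w - r (μM - μF) F`, and
since `(1 - r) (M + F) = F + w` the female equation reads
`F' = μF F (exp (log N_F - β (F + w) / (1 - r)) - 1)`.
Hence an asymptotic upper bound `U` on `F` gives the lower bound `-r (μM - μF) U / μM` on `w`,
which feeds back into the upper bound `α + κ U` on `F`, with `α = (1 - r) log N_F / β` and
`κ = r (1 - μF / μM) < 1`; lower bounds propagate in the same way. Applied to `limsup F` and
`liminf F` this contraction squeezes both onto the fixed point `α / (1 - κ)`, and then `w`, hence
`M`, converge as well.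
-/

open Filter Set Topology

theorem eventually_le_of_hasDerivAt {f f' : ℝ → ℝ} {A c : ℝ} (hc : 0 < c)
    (hf : ∀ᶠ t in atTop, HasDerivAt f (f' t) t)
    (hA : ∀ᶠ t in atTop, A ≤ f t → f' t ≤ -c) :
    ∀ᶠ t in atTop, f t ≤ A := by
  obtain ⟨T, hT⟩ := eventually_atTop.1 (hf.and hA)
  have hcont : ∀ a b, T ≤ a → ContinuousOn f (Icc a b) := fun a b ha t ht =>
    (hT t (ha.trans ht.1)).1.continuousAt.continuousWithinAt
  have hderiv : ∀ a b, T ≤ a → ∀ t ∈ Ico a b, HasDerivWithinAt f (f' t) (Ici t) t :=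
    fun a b ha t ht => (hT t (ha.trans ht.1)).1.hasDerivWithinAt
  obtain ⟨t₀, ht₀, hft₀⟩ : ∃ t₀, T ≤ t₀ ∧ f t₀ ≤ A := by
    by_contra! hgt
    set t := T + (f T - A) / c + 1
    have hTt : T ≤ t := by
      have : 0 ≤ (f T - A) / c := div_nonneg (sub_nonneg.2 (hgt T le_rfl).le) hc.le
      linarith
    have hline : ∀ s, HasDerivAt (fun s => f T - c * (s - T)) (-c) s := fun s => by
      simpa using ((hasDerivAt_id s).sub_const T).const_mul c |>.const_sub (f T)
    have hdecay := image_le_of_deriv_right_le_deriv_boundary (hcont T t le_rfl)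
      (hderiv T t le_rfl) (by simp) (fun s _ => (hline s).continuousAt.continuousWithinAt)
      (fun s _ => (hline s).hasDerivWithinAt)
      (fun s hs => (hT s hs.1).2 (hgt s hs.1).le) ⟨hTt, le_rfl⟩
    have : c * (t - T) = f T - A + c := by simp only [t]; field_simp; ring
    linarith [hgt t hTt]
  filter_upwards [eventually_ge_atTop t₀] with t ht
  exact image_le_of_deriv_right_lt_deriv_boundary (hcont t₀ t ht₀) (hderiv t₀ t ht₀)
    (B' := fun _ => 0) hft₀ (fun _ => hasDerivAt_const _ A)
    (fun s hs hfs => by linarith [(hT s (ht₀.trans hs.1)).2 hfs.ge]) ⟨ht, le_rfl⟩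

theorem eventually_ge_of_hasDerivAt {f f' : ℝ → ℝ} {A c : ℝ} (hc : 0 < c)
    (hf : ∀ᶠ t in atTop, HasDerivAt f (f' t) t)
    (hA : ∀ᶠ t in atTop, f t ≤ A → c ≤ f' t) :
    ∀ᶠ t in atTop, A ≤ f t := by
  have := eventually_le_of_hasDerivAt (f := -f) (f' := -f') (A := -A) hc
    (hf.mono fun t h => h.neg) (hA.mono fun t h hle => neg_le_neg (h (neg_le_neg_iff.1 hle)))
  exact this.mono fun t h => neg_le_neg_iff.1 h

theorem pos_of_hasDerivAt_of_neg_mul_le {f f' : ℝ → ℝ} {μ t : ℝ}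
    (hf : ∀ s, 0 ≤ s → HasDerivAt f (f' s) s) (hf' : ∀ s, 0 ≤ s → -μ * f s ≤ f' s)
    (h₀ : 0 < f 0) (ht : 0 ≤ t) : 0 < f t := by
  have hg : ∀ s, 0 ≤ s → HasDerivAt (fun s => Real.exp (μ * s) * f s)
      (Real.exp (μ * s) * (μ * f s + f' s)) s := fun s hs =>
    (((hasDerivAt_id s).const_mul μ).exp.mul (hf s hs)).congr_deriv (by simp only [id_eq, mul_one]; ring)
  have hmono : MonotoneOn (fun s => Real.exp (μ * s) * f s) (Ici 0) :=
    monotoneOn_of_hasDerivWithinAt_nonneg (convex_Ici 0)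
      (fun s hs => (hg s hs).continuousAt.continuousWithinAt)
      (fun s hs => (hg s (interior_subset hs)).hasDerivWithinAt)
      (fun s hs => mul_nonneg (Real.exp_pos _).le (by linarith [hf' s (interior_subset hs)]))
  have := hmono self_mem_Ici ht ht
  simp only [mul_zero, Real.exp_zero, one_mul] at this
  exact pos_of_mul_pos_right (h₀.trans_le this) (Real.exp_pos _).le

/-- `LimsupLE f a` and `LiminfGE f a` say `limsup_{t → ∞} f t ≤ a` and `liminf_{t → ∞} f t ≥ a`,
without the boundedness side conditions that `Filter.limsup` on `ℝ` needs to be meaningful. -/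
def LimsupLE (f : ℝ → ℝ) (a : ℝ) : Prop := ∀ ε > 0, ∀ᶠ t in atTop, f t ≤ a + ε

def LiminfGE (f : ℝ → ℝ) (a : ℝ) : Prop := ∀ ε > 0, ∀ᶠ t in atTop, a - ε ≤ f t

theorem limsupLE_neg_iff {f : ℝ → ℝ} {a : ℝ} :
    LimsupLE (fun t => -f t) (-a) ↔ LiminfGE f a := by
  refine forall₂_congr fun ε _ => eventually_congr (Eventually.of_forall fun t => ?_)
  constructor <;> intro h <;> linarith

theorem limsupLE_limsup {f : ℝ → ℝ} (hf : IsBoundedUnder (· ≤ ·) atTop f) :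
    LimsupLE f (limsup f atTop) := fun _ hε =>
  (eventually_lt_of_limsup_lt (lt_add_of_pos_right _ hε) hf).mono fun _ h => h.le

theorem liminfGE_liminf {f : ℝ → ℝ} (hf : IsBoundedUnder (· ≥ ·) atTop f) :
    LiminfGE f (liminf f atTop) := fun _ hε =>
  (eventually_lt_of_lt_liminf (sub_lt_self _ hε) hf).mono fun _ h => h.le

theorem LimsupLE.limsup_le {f : ℝ → ℝ} {a : ℝ} (h : LimsupLE f a)
    (hf : IsCoboundedUnder (· ≤ ·) atTop f) : limsup f atTop ≤ a :=
  le_of_forall_pos_le_add fun ε hε => limsup_le_of_le hf (h ε hε)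

theorem LiminfGE.le_liminf {f : ℝ → ℝ} {a : ℝ} (h : LiminfGE f a)
    (hf : IsCoboundedUnder (· ≥ ·) atTop f) : a ≤ liminf f atTop :=
  le_of_forall_pos_le_add fun ε hε => sub_le_iff_le_add.1 (le_liminf_of_le hf (h ε hε))

theorem Filter.Tendsto.limsupLE {f : ℝ → ℝ} {a : ℝ} (h : Tendsto f atTop (𝓝 a)) :
    LimsupLE f a := fun _ hε =>
  (h.eventually_lt_const (lt_add_of_pos_right a hε)).mono fun _ h => h.le

theorem Filter.Tendsto.liminfGE {f : ℝ → ℝ} {a : ℝ} (h : Tendsto f atTop (𝓝 a)) :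
    LiminfGE f a := fun _ hε =>
  (h.eventually_const_lt (sub_lt_self a hε)).mono fun _ h => h.le

theorem tendsto_of_limsupLE_of_liminfGE {f : ℝ → ℝ} {a : ℝ} (hle : LimsupLE f a)
    (hge : LiminfGE f a) : Tendsto f atTop (𝓝 a) :=
  tendsto_order.2
    ⟨fun b hb => (hge _ (half_pos (sub_pos.2 hb))).mono fun _ h => by linarith,
     fun b hb => (hle _ (half_pos (sub_pos.2 hb))).mono fun _ h => by linarith⟩

theorem liminfGE_of_hasDerivAt_linear {f g : ℝ → ℝ} {μ k U : ℝ} (hμ : 0 < μ) (hk : 0 ≤ k)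
    (hf : ∀ᶠ t in atTop, HasDerivAt f (-μ * f t - k * g t) t) (hg : LimsupLE g U) :
    LiminfGE f (-(k * U) / μ) := by
  intro ε hε
  set δ := μ * ε / (2 * (k + 1))
  have hkδ : k * δ ≤ μ * ε / 2 := by
    have : (k + 1) * δ = μ * ε / 2 := by simp only [δ]; field_simp
    nlinarith [show 0 ≤ δ by positivity]
  refine eventually_ge_of_hasDerivAt (c := μ * ε / 2) (by positivity) hf ?_
  filter_upwards [hg δ (by positivity)] with t hgt hft
  have hμf : μ * f t ≤ -(k * U) - μ * ε := by
    have := mul_le_mul_of_nonneg_left hft hμ.le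
    rwa [mul_sub, mul_div_cancel₀ _ hμ.ne'] at this
  nlinarith [mul_le_mul_of_nonneg_left hgt hk]

theorem limsupLE_of_hasDerivAt_linear {f g : ℝ → ℝ} {μ k u : ℝ} (hμ : 0 < μ) (hk : 0 ≤ k)
    (hf : ∀ᶠ t in atTop, HasDerivAt f (-μ * f t - k * g t) t) (hg : LiminfGE g u) :
    LimsupLE f (-(k * u) / μ) := by
  have := liminfGE_of_hasDerivAt_linear (f := fun t => -f t) (g := fun t => -g t) hμ hk
    (hf.mono fun t h => h.neg.congr_deriv (by ring)) (limsupLE_neg_iff.2 hg)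
  rw [← limsupLE_neg_iff] at this
  simpa [neg_div] using this

theorem hasDerivAt_log_of_hasDerivAt_mul {F : ℝ → ℝ} {g t : ℝ} (hF : HasDerivAt F (F t * g) t)
    (ht : 0 < F t) : HasDerivAt (fun s => Real.log (F s)) g t :=
  (hF.log ht.ne').congr_deriv (by field_simp)

theorem limsupLE_of_hasDerivAt_exp {F w : ℝ → ℝ} {μ β a A : ℝ} (hμ : 0 < μ) (hβ : 0 < β)
    (hA : 0 ≤ A) (hpos : ∀ᶠ t in atTop, 0 < F t)
    (hF : ∀ᶠ t in atTop, HasDerivAt F (F t * (μ * (Real.exp (a - β * (F t + w t)) - 1))) t)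
    (hw : LiminfGE w (a / β - A)) : LimsupLE F A := by
  intro ε hε
  have hAε : 0 < A + ε := by linarith
  have hdecay : Real.exp (-(β * ε / 2)) < 1 := Real.exp_lt_one_iff.2 (by linarith [mul_pos hβ hε])
  have hlog := eventually_le_of_hasDerivAt (f := fun t => Real.log (F t))
    (A := Real.log (A + ε)) (c := μ * (1 - Real.exp (-(β * ε / 2)))) (by nlinarith)
    ((hF.and hpos).mono fun t h => hasDerivAt_log_of_hasDerivAt_mul h.1 h.2) ?_
  · filter_upwards [hlog, hpos] with t h hFt
    exact (Real.log_le_log_iff hFt hAε).1 h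
  filter_upwards [hw (ε / 2) (by positivity), hpos] with t hwt hFt hle
  have hFA : A + ε ≤ F t := (Real.log_le_log_iff hAε hFt).1 hle
  have hexp : a - β * (F t + w t) ≤ -(β * ε / 2) := by
    have : β * (a / β - A - ε / 2) = a - β * A - β * ε / 2 := by field_simp
    nlinarith [mul_le_mul_of_nonneg_left hwt hβ.le, mul_le_mul_of_nonneg_left hFA hβ.le]
  nlinarith [Real.exp_le_exp.2 hexp]

theorem liminfGE_of_hasDerivAt_exp {F w : ℝ → ℝ} {μ β a A : ℝ} (hμ : 0 < μ) (hβ : 0 < β)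
    (hpos : ∀ᶠ t in atTop, 0 < F t)
    (hF : ∀ᶠ t in atTop, HasDerivAt F (F t * (μ * (Real.exp (a - β * (F t + w t)) - 1))) t)
    (hw : LimsupLE w (a / β - A)) : LiminfGE F A := by
  intro ε hε
  rcases le_or_gt (A - ε) 0 with hAε | hAε
  · exact hpos.mono fun t h => hAε.trans h.le
  have hgrowth : 1 < Real.exp (β * ε / 2) := Real.one_lt_exp_iff.2 (by positivity)
  have hlog := eventually_ge_of_hasDerivAt (f := fun t => Real.log (F t))
    (A := Real.log (A - ε)) (c := μ * (Real.exp (β * ε / 2) - 1)) (by nlinarith)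
    ((hF.and hpos).mono fun t h => hasDerivAt_log_of_hasDerivAt_mul h.1 h.2) ?_
  · filter_upwards [hlog, hpos] with t h hFt
    exact (Real.log_le_log_iff hAε hFt).1 h
  filter_upwards [hw (ε / 2) (by positivity), hpos] with t hwt hFt hle
  have hFA : F t ≤ A - ε := (Real.log_le_log_iff hFt hAε).1 hle
  have hexp : β * ε / 2 ≤ a - β * (F t + w t) := by
    have : β * (a / β - A + ε / 2) = a - β * A + β * ε / 2 := by field_simp
    nlinarith [mul_le_mul_of_nonneg_left hwt hβ.le, mul_le_mul_of_nonneg_left hFA hβ.le]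
  nlinarith [Real.exp_le_exp.2 hexp]

theorem tendsto_fixedPoint_of_affine_bounds {f : ℝ → ℝ} {α κ : ℝ} (hκ : κ < 1)
    (hf₀ : ∀ᶠ t in atTop, 0 ≤ f t) (hbdd : IsBoundedUnder (· ≤ ·) atTop f)
    (hup : ∀ U, 0 ≤ U → LimsupLE f U → LimsupLE f (α + κ * U))
    (hlo : ∀ u, LiminfGE f u → LiminfGE f (α + κ * u)) :
    Tendsto f atTop (𝓝 (α / (1 - κ))) := by
  have hbdd' : IsBoundedUnder (· ≥ ·) atTop f := ⟨0, hf₀⟩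
  set L := limsup f atTop
  set l := liminf f atTop
  have hlL : l ≤ L := liminf_le_limsup hbdd hbdd'
  have hl₀ : 0 ≤ l := le_liminf_of_le hbdd.isCoboundedUnder_ge hf₀
  have hL : L ≤ α + κ * L :=
    (hup L (hl₀.trans hlL) (limsupLE_limsup hbdd)).limsup_le hbdd'.isCoboundedUnder_le
  have hl : α + κ * l ≤ l := (hlo l (liminfGE_liminf hbdd')).le_liminf hbdd.isCoboundedUnder_ge
  have hκ' : 0 < 1 - κ := sub_pos.2 hκ
  have hLα : L ≤ α / (1 - κ) := (le_div_iff₀ hκ').2 (by linarith)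
  have hαl : α / (1 - κ) ≤ l := (div_le_iff₀ hκ').2 (by linarith)
  exact tendsto_of_liminf_eq_limsup (by linarith) (by linarith) hbdd hbdd'

structure IsEntomologicalSolution (r ρ β μM μF : ℝ) (M F : ℝ → ℝ) : Prop where
  M_nonneg : ∀ t, 0 ≤ t → 0 ≤ M t
  F_nonneg : ∀ t, 0 ≤ t → 0 ≤ F t
  hasDerivAt_M : ∀ t, 0 ≤ t →
    HasDerivAt M (r * ρ * F t * Real.exp (-(β * (M t + F t))) - μM * M t) t
  hasDerivAt_F : ∀ t, 0 ≤ t →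
    HasDerivAt F ((1 - r) * ρ * F t * Real.exp (-(β * (M t + F t))) - μF * F t) t

namespace IsEntomologicalSolution

variable {r ρ β μM μF : ℝ} {M F : ℝ → ℝ}

theorem F_pos (h : IsEntomologicalSolution r ρ β μM μF M F) (hr1 : r < 1) (hρ : 0 < ρ)
    (hF0 : 0 < F 0) {t : ℝ} (ht : 0 ≤ t) : 0 < F t := by
  refine pos_of_hasDerivAt_of_neg_mul_le (μ := μF) h.hasDerivAt_F (fun s hs => ?_) hF0 ht
  have : 0 ≤ (1 - r) * ρ * F s * Real.exp (-(β * (M s + F s))) := by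
    have := h.F_nonneg s hs
    have := sub_pos.2 hr1
    positivity
  linarith

theorem isBoundedUnder_le_F (h : IsEntomologicalSolution r ρ β μM μF M F) (hr1 : r < 1)
    (hρ : 0 < ρ) (hβ : 0 < β) (hμF : 0 < μF) : IsBoundedUnder (· ≤ ·) atTop F := by
  set G := (1 - r) * ρ * (Real.exp (-1) / β)
  have hbirth : ∀ t, 0 ≤ t → (1 - r) * ρ * F t * Real.exp (-(β * (M t + F t))) ≤ G := by
    intro t ht
    have hM := h.M_nonneg t ht
    have hF := h.F_nonneg t ht
    have hmono : Real.exp (-(β * (M t + F t))) ≤ Real.exp (-(β * F t)) :=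
      Real.exp_le_exp.2 (by nlinarith)
    have hmax := Real.mul_exp_neg_le_exp_neg_one (β * F t)
    have : F t * Real.exp (-(β * (M t + F t))) ≤ Real.exp (-1) / β := by
      rw [le_div_iff₀ hβ]
      nlinarith [mul_le_mul_of_nonneg_left hmono hF]
    calc _ = (1 - r) * ρ * (F t * Real.exp (-(β * (M t + F t)))) := by ring
      _ ≤ G := mul_le_mul_of_nonneg_left this (by nlinarith)
  refine ⟨G / μF + 1, eventually_map.2 (eventually_le_of_hasDerivAt hμF
    ((eventually_ge_atTop 0).mono h.hasDerivAt_F) ?_)⟩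
  filter_upwards [eventually_ge_atTop 0] with t ht hA
  have := mul_le_mul_of_nonneg_left hA hμF.le
  rw [mul_add, mul_div_cancel₀ _ hμF.ne'] at this
  linarith [hbirth t ht]

theorem hasDerivAt_F_eq (h : IsEntomologicalSolution r ρ β μM μF M F) (hr1 : r < 1)
    (hρ : 0 < ρ) (hμF : 0 < μF) {t : ℝ} (ht : 0 ≤ t) :
    HasDerivAt F (F t * (μF * (Real.exp (Real.log ((1 - r) * ρ / μF)
      - β / (1 - r) * (F t + ((1 - r) * M t - r * F t))) - 1))) t := by
  have hr : 0 < 1 - r := sub_pos.2 hr1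
  refine (h.hasDerivAt_F t ht).congr_deriv ?_
  have : β / (1 - r) * (F t + ((1 - r) * M t - r * F t)) = β * (M t + F t) := by
    field_simp; ring
  rw [this, Real.exp_sub, Real.exp_log (by positivity), Real.exp_neg]
  field_simp

theorem hasDerivAt_sexRatioDefect (h : IsEntomologicalSolution r ρ β μM μF M F) {t : ℝ}
    (ht : 0 ≤ t) : HasDerivAt (fun s => (1 - r) * M s - r * F s)
      (-μM * ((1 - r) * M t - r * F t) - r * (μM - μF) * F t) t :=
  (((h.hasDerivAt_M t ht).const_mul (1 - r)).sub
    ((h.hasDerivAt_F t ht).const_mul r)).congr_deriv (by ring)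

theorem tendsto_F (h : IsEntomologicalSolution r ρ β μM μF M F) (hr0 : 0 < r) (hr1 : r < 1)
    (hρ : 0 < ρ) (hβ : 0 < β) (hμM : 0 < μM) (hμF : 0 < μF) (hμ : μF ≤ μM)
    (hNF : 1 < (1 - r) * ρ / μF) (hF0 : 0 < F 0) :
    Tendsto F atTop
      (𝓝 ((1 - r) * Real.log ((1 - r) * ρ / μF) / β / (1 - r * (μM - μF) / μM))) := by
  have hr : 0 < 1 - r := sub_pos.2 hr1
  have hk : 0 ≤ r * (μM - μF) := mul_nonneg hr0.le (sub_nonneg.2 hμ)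
  have hlog : 0 < Real.log ((1 - r) * ρ / μF) := Real.log_pos hNF
  have hpos : ∀ᶠ t in atTop, 0 < F t :=
    (eventually_ge_atTop 0).mono fun _ => h.F_pos hr1 hρ hF0
  have hdF := (eventually_ge_atTop 0).mono fun _ => h.hasDerivAt_F_eq hr1 hρ hμF
  have hdw := (eventually_ge_atTop 0).mono fun _ => h.hasDerivAt_sexRatioDefect
  have hβ' : 0 < β / (1 - r) := div_pos hβ hr
  refine tendsto_fixedPoint_of_affine_bounds (κ := r * (μM - μF) / μM) ?_
    ((eventually_ge_atTop 0).mono h.F_nonneg) (h.isBoundedUnder_le_F hr1 hρ hβ hμF) ?_ ?_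
  · rw [div_lt_one hμM]
    nlinarith
  · intro U hU hFU
    refine limsupLE_of_hasDerivAt_exp hμF hβ' (by positivity) hpos hdF ?_
    convert liminfGE_of_hasDerivAt_linear hμM hk hdw hFU using 1
    field_simp
    ring
  · intro u hFu
    refine liminfGE_of_hasDerivAt_exp hμF hβ' hpos hdF ?_
    convert limsupLE_of_hasDerivAt_linear hμM hk hdw hFu using 1
    field_simp
    ring

theorem tendsto_M_of_tendsto_F (h : IsEntomologicalSolution r ρ β μM μF M F) (hr0 : 0 < r)
    (hr1 : r < 1) (hμM : 0 < μM) (hμ : μF ≤ μM) {Φ : ℝ} (hF : Tendsto F atTop (𝓝 Φ)) :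
    Tendsto M atTop (𝓝 (r * μF / ((1 - r) * μM) * Φ)) := by
  have hk : 0 ≤ r * (μM - μF) := mul_nonneg hr0.le (sub_nonneg.2 hμ)
  have hdw := (eventually_ge_atTop 0).mono fun _ => h.hasDerivAt_sexRatioDefect
  have hw : Tendsto (fun t => (1 - r) * M t - r * F t) atTop (𝓝 (-(r * (μM - μF) * Φ) / μM)) :=
    tendsto_of_limsupLE_of_liminfGE (limsupLE_of_hasDerivAt_linear hμM hk hdw hF.liminfGE)
      (liminfGE_of_hasDerivAt_linear hμM hk hdw hF.limsupLE)
  have hr : 1 - r ≠ 0 := (sub_pos.2 hr1).ne'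
  convert (hw.add (hF.const_mul r)).div_const (1 - r) using 2
  · field_simp
    ring
  · field_simp
    ring

end IsEntomologicalSolution

theorem stmt_2_general (r ρ β μM μF : ℝ)
    (hr0 : 0 < r) (hr1 : r < 1) (hρ : 0 < ρ) (hβ : 0 < β)
    (hμM : 0 < μM) (hμF : 0 < μF) (hμ : μF ≤ μM)
    (hNF : 1 < (1 - r) * ρ / μF)
    (M F : ℝ → ℝ)
    (hMnn : ∀ t, 0 ≤ t → 0 ≤ M t) (hFnn : ∀ t, 0 ≤ t → 0 ≤ F t)
    (hF0 : 0 < F 0)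
    (hdM : ∀ t, 0 ≤ t →
      HasDerivAt M (r * ρ * F t * Real.exp (-(β * (M t + F t))) - μM * M t) t)
    (hdF : ∀ t, 0 ≤ t →
      HasDerivAt F ((1 - r) * ρ * F t * Real.exp (-(β * (M t + F t))) - μF * F t) t) :
    Filter.Tendsto M Filter.atTop
      (nhds ((r * ρ / μM) / ((1 - r) * ρ / μF + r * ρ / μM) * (1 / β) *
        Real.log ((1 - r) * ρ / μF))) ∧
    Filter.Tendsto F Filter.atTop
      (nhds (((1 - r) * ρ / μF) / ((1 - r) * ρ / μF + r * ρ / μM) * (1 / β) *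
        Real.log ((1 - r) * ρ / μF))) := by
  have h : IsEntomologicalSolution r ρ β μM μF M F := ⟨hMnn, hFnn, hdM, hdF⟩
  have hF := h.tendsto_F hr0 hr1 hρ hβ hμM hμF hμ hNF hF0
  have hr : 0 < 1 - r := sub_pos.2 hr1
  have hκ : 1 - r * (μM - μF) / μM = ((1 - r) * μM + r * μF) / μM := by field_simp; ring
  rw [hκ] at hF
  constructor
  · convert h.tendsto_M_of_tendsto_F hr0 hr1 hμM hμ hF using 2
    field_simp
  · convert hF using 2
    field_simp

theorem stmt_2 (r ρ β μM μF : ℝ)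
    (hr0 : 0 < r) (hr1 : r < 1) (hρ : 0 < ρ) (hβ : 0 < β)
    (hμM : 0 < μM) (hμF : 0 < μF) (hμ : μF ≤ μM)
    (hNF : 1 < (1 - r) * ρ / μF)
    (M F : ℝ → ℝ)
    (hMnn : ∀ t, 0 ≤ t → 0 ≤ M t) (hFnn : ∀ t, 0 ≤ t → 0 ≤ F t)
    (hM0 : 0 ≤ M 0) (hF0 : 0 < F 0)
    (hdM : ∀ t, 0 ≤ t →
      HasDerivAt M (r * ρ * F t * Real.exp (-(β * (M t + F t))) - μM * M t) t)
    (hdF : ∀ t, 0 ≤ t →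
      HasDerivAt F ((1 - r) * ρ * F t * Real.exp (-(β * (M t + F t))) - μF * F t) t) :
    Filter.Tendsto M Filter.atTop
      (nhds ((r * ρ / μM) / ((1 - r) * ρ / μF + r * ρ / μM) * (1 / β) *
        Real.log ((1 - r) * ρ / μF))) ∧
    Filter.Tendsto F Filter.atTop
      (nhds (((1 - r) * ρ / μF) / ((1 - r) * ρ / μF + r * ρ / μM) * (1 / β) *
        Real.log ((1 - r) * ρ / μF))) :=
  stmt_2_general r ρ β μM μF hr0 hr1 hρ hβ hμM hμF hμ hNF M F hMnn hFnn hF0 hdM hdF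
end

section
/- Let b > 1. Then the equation 1 + φ(1 + √(1 + 2/φ)) = b·exp(−2/(1 + √(1 + 2/φ))) admits a unique positive root φ^crit. -/
/-!
Substitute `v = 2 / (1 + √(1 + 2/φ))`. As `φ` runs over `(0, ∞)`, `v` runs bijectively over `(0, 1)`
with inverse `φ = v² / (2(1 - v))`, and the left-hand side becomes `1 / (1 - v)`. The equation is then
`exp v = b (1 - v)`, whose left side increases and right side decreases in `v`, with the sign of
the difference changing on `(0, 1)` because `b > 1`.
-/

open Real Set

lemma exists_unique_exp_eq_mul_one_sub {b : ℝ} (hb : 1 < b) :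
    ∃! v, v ∈ Ioo (0 : ℝ) 1 ∧ exp v = b * (1 - v) := by
  have hmono : StrictMono fun v => exp v + b * v - b :=
    (exp_strictMono.add (strictMono_mul_left_of_pos (by linarith))).add_const _
  obtain ⟨v, hv, hv0⟩ : ∃ v ∈ Ioo (0 : ℝ) 1, exp v + b * v - b = 0 :=
    intermediate_value_Ioo zero_le_one (by fun_prop)
      ⟨by simpa using hb, by simp only [mul_one, add_sub_cancel_right]; positivity⟩
  exact ⟨v, ⟨hv, by linarith⟩, fun w ⟨_, hw⟩ => hmono.injective (by linarith)⟩

lemma one_add_sqrt_one_add_two_div_sq_div {v : ℝ} (h0 : 0 < v) (h1 : v < 1) :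
    1 + √(1 + 2 / (v ^ 2 / (2 * (1 - v)))) = 2 / v := by
  have hsq : 1 + 2 / (v ^ 2 / (2 * (1 - v))) = ((2 - v) / v) ^ 2 := by
    field_simp
    ring
  rw [hsq, sqrt_sq (div_nonneg (by linarith) h0.le)]
  field_simp
  ring

lemma exists_mem_Ioo_eq_sq_div {φ : ℝ} (hφ : 0 < φ) :
    ∃ v ∈ Ioo (0 : ℝ) 1, φ = v ^ 2 / (2 * (1 - v)) := by
  set r := √(1 + 2 / φ) with hr
  have hr1 : 1 < r := by
    rw [hr, lt_sqrt zero_le_one]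
    have : 0 < 2 / φ := by positivity
    linarith
  have hr2 : r ^ 2 = 1 + 2 / φ := sq_sqrt (by positivity)
  refine ⟨2 / (1 + r), ⟨by positivity, (div_lt_one (by linarith)).2 (by linarith)⟩, ?_⟩
  have hsub : 1 - 2 / (1 + r) = (r - 1) / (1 + r) := by field_simp; ring
  rw [hsub, eq_div_iff (by positivity)]
  field_simp at hr2 ⊢
  nlinarith

lemma one_add_sq_div_mul_eq_iff {b v : ℝ} (h1 : v < 1) :
    1 + v ^ 2 / (2 * (1 - v)) * (2 / v) = b * exp (-(2 / (2 / v))) ↔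
      exp v = b * (1 - v) := by
  have hsub : 0 < 1 - v := by linarith
  have hlhs : 1 + v ^ 2 / (2 * (1 - v)) * (2 / v) = 1 / (1 - v) := by
    field_simp
    ring
  rw [hlhs, div_div_cancel₀ (by norm_num : (2:ℝ) ≠ 0), exp_neg, ← div_eq_mul_inv,
    div_eq_div_iff hsub.ne' (exp_pos v).ne', one_mul, eq_comm]

theorem stmt_4 (b : ℝ) (hb : 1 < b) :
    ∃! φ : ℝ, 0 < φ ∧
      1 + φ * (1 + Real.sqrt (1 + 2 / φ)) =
        b * Real.exp (-(2 / (1 + Real.sqrt (1 + 2 / φ)))) := by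
  obtain ⟨v, ⟨⟨hv0, hv1⟩, hv⟩, huniq⟩ := exists_unique_exp_eq_mul_one_sub hb
  refine ⟨v ^ 2 / (2 * (1 - v)), ⟨by have := sub_pos.2 hv1; positivity, ?_⟩, ?_⟩
  · rwa [one_add_sqrt_one_add_two_div_sq_div hv0 hv1, one_add_sq_div_mul_eq_iff hv1]
  · rintro φ ⟨hφ, heq⟩
    obtain ⟨w, ⟨hw0, hw1⟩, rfl⟩ := exists_mem_Ioo_eq_sq_div hφ
    rw [one_add_sqrt_one_add_two_div_sq_div hw0 hw1, one_add_sq_div_mul_eq_iff hw1] at heq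
    rw [huniq w ⟨⟨hw0, hw1⟩, heq⟩]
end

section
/- Let a, b, c be positive reals with b > 1, and let φ^crit be the unique positive root of the equation 1 + φ(1 + √(1 + 2/φ)) = b·exp(−2/(1 + √(1 + 2/φ))). Then the equation f(x) := 1 + a/x − b·e^{−cx} = 0 admits exactly two distinct positive roots if 0 < ac < 2φ^crit, exactly one positive root if ac = 2φ^crit, and no positive root if ac > 2φ^crit. -/
open Real Set Filter

/-! Clearing the denominator, the positive roots are the positive zeros of
`F x = x + a - b x e^{-cx}`, whose derivative is `1 - b (1 - cx) e^{-cx}`. As `t ↦ (1 - t) e^{-t}`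
decreases on `(-∞, 2]` and is negative beyond `1`, `F` decreases up to `u / c` and increases after
it, where `u ∈ (0, 1)` solves `b (1 - u) e^{-u} = 1`. There `c F (u / c) = ac - u² / (1 - u)`, and
`φ = u² / (2 (1 - u))` solves the equation defining `φ^crit` (then `√(1 + 2/φ) = (2 - u) / u`), so
`F (u / c)` has the sign of `ac - 2 φ^crit`. Since `F 0 = a > 0` and `F` is eventually positive,
`F` has two, one or no positive zeros accordingly. -/

section Valley

variable {F : ℝ → ℝ} {l m : ℝ}

theorem lt_of_strictAntiOn_of_strictMonoOn (hA : StrictAntiOn F (Ioc l m))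
    (hM : StrictMonoOn F (Ici m)) {x : ℝ} (hx : l < x) (hxm : x ≠ m) : F m < F x := by
  rcases hxm.lt_or_gt with h | h
  · exact hA ⟨hx, h.le⟩ ⟨hx.trans h, le_rfl⟩ h
  · exact hM self_mem_Ici (mem_Ici.2 h.le) h

theorem encard_zeros_eq_zero_of_pos (hA : StrictAntiOn F (Ioc l m))
    (hM : StrictMonoOn F (Ici m)) (hFm : 0 < F m) :
    {x | l < x ∧ F x = 0}.encard = 0 := by
  rw [encard_eq_zero, eq_empty_iff_forall_notMem]
  rintro x ⟨hx, hFx⟩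
  rcases eq_or_ne x m with rfl | hxm
  · exact hFm.ne' hFx
  · exact (hFm.trans (lt_of_strictAntiOn_of_strictMonoOn hA hM hx hxm)).ne' hFx

theorem encard_zeros_eq_one_of_eq_zero (hA : StrictAntiOn F (Ioc l m))
    (hM : StrictMonoOn F (Ici m)) (hlm : l < m) (hFm : F m = 0) :
    {x | l < x ∧ F x = 0}.encard = 1 := by
  rw [encard_eq_one]
  refine ⟨m, Subset.antisymm ?_ (singleton_subset_iff.2 ⟨hlm, hFm⟩)⟩
  rintro x ⟨hx, hFx⟩
  by_contra hxm
  exact (lt_of_strictAntiOn_of_strictMonoOn hA hM hx hxm).ne (hFm.trans hFx.symm)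

theorem encard_zeros_eq_two_of_neg (hA : StrictAntiOn F (Ioc l m))
    (hM : StrictMonoOn F (Ici m)) (hlm : l < m) (hFm : F m < 0) (hF : ContinuousOn F (Ici l))
    (hFl : 0 < F l) (hFtop : ∀ᶠ x in atTop, 0 < F x) :
    {x | l < x ∧ F x = 0}.encard = 2 := by
  obtain ⟨X, hFX, hmX⟩ := (hFtop.and (eventually_gt_atTop m)).exists
  obtain ⟨r₁, ⟨hlr₁, hr₁m⟩, hr₁⟩ :=
    intermediate_value_Ioo' hlm.le (hF.mono Icc_subset_Ici_self) ⟨hFm, hFl⟩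
  obtain ⟨r₂, ⟨hmr₂, -⟩, hr₂⟩ :=
    intermediate_value_Ioo hmX.le (hF.mono fun x hx ↦ hlm.le.trans hx.1) ⟨hFm, hFX⟩
  convert encard_pair (hr₁m.trans hmr₂).ne
  ext x
  refine ⟨fun ⟨hx, hFx⟩ ↦ ?_, ?_⟩
  · rcases lt_trichotomy x m with h | rfl | h
    · exact .inl (hA.injOn ⟨hx, h.le⟩ ⟨hlr₁, hr₁m.le⟩ (hFx.trans hr₁.symm))
    · exact absurd hFx hFm.ne
    · exact .inr (hM.injOn (mem_Ici.2 h.le) (mem_Ici.2 hmr₂.le) (hFx.trans hr₂.symm))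
  · rintro (rfl | rfl)
    exacts [⟨hlr₁, hr₁⟩, ⟨hlm.trans hmr₂, hr₂⟩]

end Valley

theorem strictAntiOn_one_sub_mul_exp_neg : StrictAntiOn (fun t ↦ (1 - t) * exp (-t)) (Iic 2) := by
  have hderiv (t : ℝ) : HasDerivAt (fun t ↦ (1 - t) * exp (-t)) ((t - 2) * exp (-t)) t :=
    (((hasDerivAt_id' t).const_sub 1).fun_mul (hasDerivAt_neg' t).exp).congr_deriv (by ring)
  refine strictAntiOn_of_deriv_neg (convex_Iic 2) (by fun_prop) fun t ht ↦ ?_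
  rw [interior_Iic] at ht
  rw [(hderiv t).deriv]
  exact mul_neg_of_neg_of_pos (by linarith [mem_Iio.1 ht]) (exp_pos _)

theorem one_sub_mul_exp_neg_lt_of_lt {t u : ℝ} (hu : u < 1) (hut : u < t) :
    (1 - t) * exp (-t) < (1 - u) * exp (-u) := by
  rcases le_or_gt t 2 with ht | ht
  · exact strictAntiOn_one_sub_mul_exp_neg (mem_Iic.2 (by linarith)) ht hut
  · calc (1 - t) * exp (-t) < 0 := mul_neg_of_neg_of_pos (by linarith) (exp_pos _)
      _ < (1 - u) * exp (-u) := mul_pos (by linarith) (exp_pos _)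

theorem exists_mul_one_sub_mul_exp_neg_eq_one {b : ℝ} (hb : 1 < b) :
    ∃ u ∈ Ioo 0 1, b * ((1 - u) * exp (-u)) = 1 := by
  have hb₀ : 0 < b := by linarith
  obtain ⟨u, hu, hbu⟩ := intermediate_value_Ioo' zero_le_one
    (f := fun t ↦ (1 - t) * exp (-t)) (by fun_prop)
    (show b⁻¹ ∈ Ioo _ _ by simp [inv_lt_one_of_one_lt₀ hb, hb₀])
  refine ⟨u, hu, ?_⟩
  rw [show (1 - u) * exp (-u) = b⁻¹ from hbu, mul_inv_cancel₀ hb₀.ne']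

theorem mul_exp_neg_eq_inv {b u : ℝ} (hbu : b * ((1 - u) * exp (-u)) = 1) :
    b * exp (-u) = (1 - u)⁻¹ :=
  eq_inv_of_mul_eq_one_left (by linear_combination hbu)

noncomputable def clearedRootFn (a b c x : ℝ) : ℝ := x + a - b * x * exp (-(c * x))

section ClearedRootFn

variable {a b c u : ℝ}

theorem clearedRootFn_eq_mul {x : ℝ} (hx : x ≠ 0) :
    clearedRootFn a b c x = x * (1 + a / x - b * exp (-(c * x))) := by
  rw [clearedRootFn]
  field_simp

theorem continuous_clearedRootFn : Continuous (clearedRootFn a b c) := by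
  unfold clearedRootFn
  fun_prop

theorem hasDerivAt_clearedRootFn (x : ℝ) :
    HasDerivAt (clearedRootFn a b c) (1 - b * ((1 - c * x) * exp (-(c * x)))) x := by
  have hexp : HasDerivAt (fun x ↦ exp (-(c * x))) (-c * exp (-(c * x))) x :=
    ((hasDerivAt_id' x).const_mul c).fun_neg.exp.congr_deriv (by ring)
  exact (((hasDerivAt_id' x).add_const a).fun_sub
    (((hasDerivAt_id' x).const_mul b).fun_mul hexp)).congr_deriv (by ring)

theorem strictAntiOn_clearedRootFn (hb : 0 < b) (hc : 0 < c)
    (hbu : b * ((1 - u) * exp (-u)) = 1) (hu : u ≤ 2) :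
    StrictAntiOn (clearedRootFn a b c) (Iic (u / c)) := by
  refine strictAntiOn_of_deriv_neg (convex_Iic _) continuous_clearedRootFn.continuousOn
    fun x hx ↦ ?_
  rw [interior_Iic, mem_Iio, lt_div_iff₀' hc] at hx
  rw [(hasDerivAt_clearedRootFn x).deriv, sub_neg]
  calc 1 = b * ((1 - u) * exp (-u)) := hbu.symm
    _ < b * ((1 - c * x) * exp (-(c * x))) := mul_lt_mul_of_pos_left
      (strictAntiOn_one_sub_mul_exp_neg (mem_Iic.2 (hx.le.trans hu)) (mem_Iic.2 hu) hx) hb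

theorem strictMonoOn_clearedRootFn (hb : 0 < b) (hc : 0 < c)
    (hbu : b * ((1 - u) * exp (-u)) = 1) (hu : u < 1) :
    StrictMonoOn (clearedRootFn a b c) (Ici (u / c)) := by
  refine strictMonoOn_of_deriv_pos (convex_Ici _) continuous_clearedRootFn.continuousOn
    fun x hx ↦ ?_
  rw [interior_Ici, mem_Ioi, div_lt_iff₀' hc] at hx
  rw [(hasDerivAt_clearedRootFn x).deriv, sub_pos]
  calc b * ((1 - c * x) * exp (-(c * x))) < b * ((1 - u) * exp (-u)) :=
      mul_lt_mul_of_pos_left (one_sub_mul_exp_neg_lt_of_lt hu hx) hb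
    _ = 1 := hbu

theorem clearedRootFn_div_eq (hc : 0 < c) (hbu : b * ((1 - u) * exp (-u)) = 1) (hu : u < 1) :
    clearedRootFn a b c (u / c) = (a * c - u ^ 2 / (1 - u)) / c := by
  have h1u : 1 - u ≠ 0 := by linarith
  rw [clearedRootFn, mul_div_cancel₀ u hc.ne', mul_right_comm, mul_exp_neg_eq_inv hbu]
  field_simp
  ring

theorem eventually_clearedRootFn_pos (ha : 0 < a) (hb : 0 ≤ b) (hc : 0 < c) :
    ∀ᶠ x in atTop, 0 < clearedRootFn a b c x := by
  filter_upwards [eventually_ge_atTop (b / c)] with x hx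
  have hcx : c * x * exp (-(c * x)) ≤ 1 :=
    (mul_exp_neg_le_exp_neg_one _).trans (exp_le_one_iff.2 (by norm_num))
  have : b * x * exp (-(c * x)) ≤ x := by
    calc b * x * exp (-(c * x)) = b / c * (c * x * exp (-(c * x))) := by field_simp
      _ ≤ b / c := mul_le_of_le_one_right (by positivity) hcx
      _ ≤ x := hx
  rw [clearedRootFn]
  linarith

end ClearedRootFn

def IsCriticalPhi (b φ : ℝ) : Prop :=
  1 + φ * (1 + √(1 + 2 / φ)) = b * exp (-(2 / (1 + √(1 + 2 / φ))))

theorem isCriticalPhi_sq_div {b u : ℝ} (hu : u ∈ Ioo 0 1)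
    (hbu : b * ((1 - u) * exp (-u)) = 1) : IsCriticalPhi b (u ^ 2 / (2 * (1 - u))) := by
  obtain ⟨hu₀, hu₁⟩ := hu
  have h1u : 0 < 1 - u := by linarith
  have hsqrt : √(1 + 2 / (u ^ 2 / (2 * (1 - u)))) = (2 - u) / u := by
    rw [sqrt_eq_iff_mul_self_eq (by positivity) (div_nonneg (by linarith) hu₀.le)]
    field_simp
    ring
  rw [IsCriticalPhi, hsqrt, show 2 / (1 + (2 - u) / u) = u by field_simp; ring,
    mul_exp_neg_eq_inv hbu]
  field_simp
  ring

theorem setOf_pos_root_eq {a b c : ℝ} :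
    {x : ℝ | 0 < x ∧ 1 + a / x - b * exp (-(c * x)) = 0} =
      {x | 0 < x ∧ clearedRootFn a b c x = 0} := by
  ext x
  refine and_congr_right fun hx ↦ ?_
  rw [clearedRootFn_eq_mul hx.ne', mul_eq_zero, or_iff_right hx.ne']

theorem stmt_5_general (a b c φcrit : ℝ) (ha : 0 < a) (hb : 1 < b) (hc : 0 < c)
    (hφuniq : ∀ φ : ℝ, 0 < φ →
      1 + φ * (1 + Real.sqrt (1 + 2 / φ)) =
        b * Real.exp (-(2 / (1 + Real.sqrt (1 + 2 / φ)))) → φ = φcrit) :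
    (a * c < 2 * φcrit →
      {x : ℝ | 0 < x ∧ 1 + a / x - b * Real.exp (-(c * x)) = 0}.encard = 2) ∧
    (a * c = 2 * φcrit →
      {x : ℝ | 0 < x ∧ 1 + a / x - b * Real.exp (-(c * x)) = 0}.encard = 1) ∧
    (2 * φcrit < a * c →
      {x : ℝ | 0 < x ∧ 1 + a / x - b * Real.exp (-(c * x)) = 0}.encard = 0) := by
  obtain ⟨u, hu, hbu⟩ := exists_mul_one_sub_mul_exp_neg_eq_one hb
  have hb₀ : 0 < b := by linarith
  have h1u : 0 < 1 - u := by linarith [hu.2]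
  have hφ : 2 * φcrit = u ^ 2 / (1 - u) := by
    rw [← hφuniq _ (div_pos (pow_pos hu.1 2) (by positivity)) (isCriticalPhi_sq_div hu hbu)]
    field_simp
  have hm : 0 < u / c := div_pos hu.1 hc
  have hA : StrictAntiOn (clearedRootFn a b c) (Ioc 0 (u / c)) :=
    (strictAntiOn_clearedRootFn hb₀ hc hbu (by linarith [hu.2])).mono Ioc_subset_Iic_self
  have hM := strictMonoOn_clearedRootFn (a := a) hb₀ hc hbu hu.2
  have hmin : clearedRootFn a b c (u / c) = (a * c - 2 * φcrit) / c := by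
    rw [hφ]
    exact clearedRootFn_div_eq hc hbu hu.2
  rw [setOf_pos_root_eq]
  refine ⟨fun h ↦ ?_, fun h ↦ ?_, fun h ↦ ?_⟩
  · refine encard_zeros_eq_two_of_neg hA hM hm ?_ continuous_clearedRootFn.continuousOn
      (by simpa [clearedRootFn] using ha) (eventually_clearedRootFn_pos ha hb₀.le hc)
    rw [hmin]
    exact div_neg_of_neg_of_pos (by linarith) hc
  · exact encard_zeros_eq_one_of_eq_zero hA hM hm (by rw [hmin, h, sub_self, zero_div])
  · exact encard_zeros_eq_zero_of_pos hA hM (by rw [hmin]; exact div_pos (by linarith) hc)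

theorem stmt_5 (a b c φcrit : ℝ) (ha : 0 < a) (hb : 1 < b) (hc : 0 < c)
    (hφpos : 0 < φcrit)
    (hφroot : 1 + φcrit * (1 + Real.sqrt (1 + 2 / φcrit)) =
      b * Real.exp (-(2 / (1 + Real.sqrt (1 + 2 / φcrit)))))
    (hφuniq : ∀ φ : ℝ, 0 < φ →
      1 + φ * (1 + Real.sqrt (1 + 2 / φ)) =
        b * Real.exp (-(2 / (1 + Real.sqrt (1 + 2 / φ)))) → φ = φcrit) :
    (a * c < 2 * φcrit →
      {x : ℝ | 0 < x ∧ 1 + a / x - b * Real.exp (-(c * x)) = 0}.encard = 2) ∧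
    (a * c = 2 * φcrit →
      {x : ℝ | 0 < x ∧ 1 + a / x - b * Real.exp (-(c * x)) = 0}.encard = 1) ∧
    (2 * φcrit < a * c →
      {x : ℝ | 0 < x ∧ 1 + a / x - b * Real.exp (-(c * x)) = 0}.encard = 0) :=
  stmt_5_general a b c φcrit ha hb hc hφuniq
end

section
/- Assume N_F > 1 and Λ > Λ^crit, where Λ^crit := 2·(μ_S/(βγ))·φ^crit/(1 + N_F/N_M) and φ^crit is the unique positive solution of 1 + φ(1 + √(1 + 2/φ)) = N_F·exp(−2/(1 + √(1 + 2/φ))). Set M_S* := Λ/μ_S. Then every solution of the reduced SIT system with nonnegative initial data converges to (0,0) as t → +∞; that is, if M, F : [0,∞) → ℝ are continuously differentiable, nonnegative, and satisfy M'(t) = rρ·(F(t)M(t)/(M(t)+γM_S*))·e^{−β(M(t)+F(t))} − μ_M M(t) and F'(t) = (1−r)ρ·(F(t)M(t)/(M(t)+γM_S*))·e^{−β(M(t)+F(t))} − μ_F F(t) for all t ≥ 0, then M(t) → 0 and F(t) → 0. -/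
/-!
In the rescaled variables `u = M / N_M`, `w = F / N_F` the system reads `u' = μ_M (G - u)`,
`w' = μ_F (G - w)` with the common birth term `G = F M e^{-β(M+F)} / (M + A)`, `A = γ M_S*`.
Since `M ≥ N_M min(u, w)` and `F ≥ N_F min(u, w)`, one gets `G ≤ max(u, w) · N_F p(N_M min(u, w))`
for the profile `p x = x e^{-bx} / (x + A)`, `b = β (1 + N_F / N_M)`. The profile is maximal at the
root of `b x (x + A) = A`, and with `φ = b A / 2` the condition `N_F max p < 1` is the inequality
`critGap N_F φ > 0`. It holds because `φ > φ^crit` (this is `Λ > Λ^crit`): the gap is positive for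
large `φ`, so a sign change beyond `φ^crit` would produce a second root. Hence `G ≤ θ max(u, w)`
with `θ < 1`, and for `k` so large that `θ^k` is small the power sum `u^k + w^k` decays
exponentially.
-/

open Real Set Filter Topology

noncomputable def profile (b A x : ℝ) : ℝ := x * exp (-(b * x)) / (x + A)

theorem profile_le_of_root {b A x x₀ : ℝ} (hb : 0 < b) (hA : 0 < A) (hx : 0 ≤ x)
    (hx₀ : 0 < x₀) (hx₀root : b * x₀ * (x₀ + A) = A) : profile b A x ≤ profile b A x₀ := by
  unfold profile
  rw [div_le_div_iff₀ (by linarith) (by linarith)]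
  have htangent : exp (-(b * x)) * (1 + b * (x - x₀)) ≤ exp (-(b * x₀)) := by
    rw [show -(b * x₀) = -(b * x) + b * (x - x₀) by ring, exp_add]
    gcongr
    linarith [add_one_le_exp (b * (x - x₀))]
  have hsq : x₀ * (x + A) * (1 + b * (x - x₀)) - x * (x₀ + A) = b * x₀ * (x - x₀) ^ 2 := by
    linear_combination (x - x₀) * hx₀root
  calc x * exp (-(b * x)) * (x₀ + A)
      ≤ x * exp (-(b * x)) * (x₀ + A) + exp (-(b * x)) * (b * x₀ * (x - x₀) ^ 2) := by
        have := hb; have := hx₀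
        exact le_add_of_nonneg_right (by positivity)
    _ = x₀ * (x + A) * (exp (-(b * x)) * (1 + b * (x - x₀))) := by
        linear_combination -exp (-(b * x)) * hsq
    _ ≤ x₀ * exp (-(b * x₀)) * (x + A) := by
        nlinarith [mul_le_mul_of_nonneg_left htangent (by positivity : 0 ≤ x₀ * (x + A))]

/-- `φ^crit` is the positive root of `critGap N_F`. -/
noncomputable def critGap (N φ : ℝ) : ℝ :=
  1 + φ * (1 + √(1 + 2 / φ)) - N * exp (-(2 / (1 + √(1 + 2 / φ))))

theorem continuousOn_critGap (N : ℝ) : ContinuousOn (critGap N) (Ioi 0) := by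
  unfold critGap
  have hsqrt : ContinuousOn (fun φ : ℝ => √(1 + 2 / φ)) (Ioi 0) :=
    (continuousOn_const.add (continuousOn_const.div continuousOn_id
      fun φ hφ => (mem_Ioi.1 hφ).ne')).sqrt
  refine (continuousOn_const.add (continuousOn_id.mul (continuousOn_const.add hsqrt))).sub
    (continuousOn_const.mul (continuousOn_const.div (continuousOn_const.add hsqrt)
      fun φ _ => (by positivity : (0 : ℝ) < 1 + √(1 + 2 / φ)).ne').neg.rexp)

theorem critGap_pos_of_le_two_mul {N φ : ℝ} (hN : 0 ≤ N) (hφ : 0 < φ) (hNφ : N ≤ 2 * φ) :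
    0 < critGap N φ := by
  have hsqrt : 1 ≤ √(1 + 2 / φ) := one_le_sqrt.2 (by have := div_pos two_pos hφ; linarith)
  have hexp : exp (-(2 / (1 + √(1 + 2 / φ)))) ≤ 1 := exp_le_one_iff.2 (by
    have : 0 < 2 / (1 + √(1 + 2 / φ)) := by positivity
    linarith)
  unfold critGap
  nlinarith [mul_le_mul_of_nonneg_left hexp hN]

theorem critGap_pos_of_lt {N φc φ : ℝ} (hN : 0 ≤ N) (hφ : 0 < φ)
    (huniq : ∀ ψ, 0 < ψ → critGap N ψ = 0 → ψ = φc) (hφc : φc < φ) : 0 < critGap N φ := by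
  by_contra! hle
  obtain ⟨ψ, hψ, hψ0⟩ : ∃ ψ ∈ Icc φ (φ + N), critGap N ψ = 0 :=
    intermediate_value_Icc (by linarith) ((continuousOn_critGap N).mono
      fun ψ hψ => lt_of_lt_of_le hφ hψ.1)
      ⟨hle, (critGap_pos_of_le_two_mul hN (by linarith) (by linarith)).le⟩
  exact (lt_of_lt_of_le hφc hψ.1).ne' (huniq ψ (lt_of_lt_of_le hφ hψ.1) hψ0)

theorem exists_lt_one_forall_mul_profile_le {N b A φc : ℝ} (hN : 0 ≤ N) (hb : 0 < b)
    (hA : 0 < A) (huniq : ∀ ψ, 0 < ψ → critGap N ψ = 0 → ψ = φc) (hφc : φc < b * A / 2) :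
    ∃ θ, 0 ≤ θ ∧ θ < 1 ∧ ∀ x, 0 ≤ x → N * profile b A x ≤ θ := by
  obtain ⟨φ, rfl⟩ : ∃ φ, b = 2 * φ / A := ⟨b * A / 2, by field_simp⟩
  have hφ0 : 0 < φ := by have := mul_pos hb hA; field_simp at this; linarith
  obtain ⟨s, hs⟩ : ∃ s, s = √(1 + 2 / φ) := ⟨_, rfl⟩
  have hs1 : 1 ≤ s := hs ▸ one_le_sqrt.2 (by have := div_pos two_pos hφ0; linarith)
  have hs2 : φ * s ^ 2 = φ + 2 := by rw [hs, sq_sqrt (by positivity)]; field_simp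
  -- the positive root of `b x (x + A) = A`
  obtain ⟨x₀, hx₀⟩ : ∃ x₀, x₀ = A / (φ * (1 + s)) := ⟨_, rfl⟩
  have hx₀0 : 0 < x₀ := by rw [hx₀]; positivity
  have hbx₀ : 2 * φ / A * x₀ = 2 / (1 + s) := by rw [hx₀]; field_simp
  have hx₀A : x₀ + A = x₀ * (1 + φ * (1 + s)) := by rw [hx₀]; field_simp
  have hroot : 2 * φ / A * x₀ * (x₀ + A) = A := by
    rw [hbx₀, hx₀A, hx₀]; field_simp; linear_combination -hs2
  refine ⟨N * profile (2 * φ / A) A x₀, by unfold profile; positivity, ?_, fun x hx =>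
    mul_le_mul_of_nonneg_left (profile_le_of_root hb hA hx hx₀0 hroot) hN⟩
  rw [profile, hbx₀, hx₀A, mul_div_mul_left _ _ hx₀0.ne', mul_div_assoc',
    div_lt_one (by positivity)]
  have hgap := critGap_pos_of_lt hN hφ0 huniq (by field_simp at hφc; linarith)
  rw [critGap, ← hs] at hgap
  linarith

theorem mul_div_add_mul_exp_le_mul_max {NM NF A β θ m f : ℝ} (hNM : 0 < NM) (hNF : 0 < NF)
    (hA : 0 < A) (hβ : 0 ≤ β) (hm : 0 ≤ m) (hf : 0 ≤ f)
    (hθ : ∀ x, 0 ≤ x → NF * profile (β * (1 + NF / NM)) A x ≤ θ) :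
    f * m / (m + A) * exp (-(β * (m + f))) ≤ θ * max (m / NM) (f / NF) := by
  set p := min (m / NM) (f / NF)
  set q := max (m / NM) (f / NF)
  have hp : 0 ≤ p := le_min (by positivity) (by positivity)
  have hq : 0 ≤ q := hp.trans min_le_max
  have hpm : NM * p ≤ m := by
    have := min_le_left (m / NM) (f / NF); rwa [le_div_iff₀' hNM] at this
  have hpf : NF * p ≤ f := by
    have := min_le_right (m / NM) (f / NF); rwa [le_div_iff₀' hNF] at this
  have hpq : p * q = m / NM * (f / NF) := min_mul_max _ _
  calc f * m / (m + A) * exp (-(β * (m + f)))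
      = q * (NF * (NM * p / (m + A) * exp (-(β * (m + f))))) := by
        rw [show ∀ E, q * (NF * (NM * p / (m + A) * E)) = p * q * NF * NM * E / (m + A) by
          intro E; ring, hpq]
        field_simp
    _ ≤ q * (NF * (NM * p / (NM * p + A) * exp (-(β * ((NM + NF) * p))))) := by
        gcongr ?_ * (_ * (_ / ?_ * exp (-(β * ?_))))
        · linarith
        · linarith
    _ = q * (NF * profile (β * (1 + NF / NM)) A (NM * p)) := by
        rw [profile, show β * ((NM + NF) * p) = β * (1 + NF / NM) * (NM * p) by field_simp]
        ring
    _ ≤ q * θ := mul_le_mul_of_nonneg_left (hθ _ (by positivity)) hq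
    _ = θ * q := mul_comm _ _

theorem pow_mul_sub_le_pow_succ {a w : ℝ} (n : ℕ) (ha : 0 ≤ a) (hw : 0 ≤ w) :
    w ^ n * (a - w) ≤ a ^ (n + 1) := by
  rcases le_total w a with h | h
  · calc w ^ n * (a - w) ≤ a ^ n * a := by gcongr; linarith
      _ = a ^ (n + 1) := (pow_succ a n).symm
  · exact (mul_nonpos_of_nonneg_of_nonpos (by positivity) (by linarith)).trans (by positivity)

theorem pow_mul_relaxation_add_le_of_le {c₁ c₂ θ u w G : ℝ} (n : ℕ) (hc₁ : 0 ≤ c₁)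
    (hc₂ : 0 ≤ c₂) (hθ₀ : 0 ≤ θ) (hθ₁ : θ ≤ 1) (hw : 0 ≤ w) (hwu : w ≤ u) (hG : G ≤ θ * u)
    (hn : max c₁ c₂ * θ ^ (n + 1) ≤ min c₁ c₂ * (1 - θ) / 2) :
    u ^ n * (c₁ * (G - u)) + w ^ n * (c₂ * (G - w)) ≤
      -(min c₁ c₂ * (1 - θ) / 4 * (u ^ (n + 1) + w ^ (n + 1))) := by
  have hu : 0 ≤ u := hw.trans hwu
  have hθ : 0 ≤ 1 - θ := by linarith
  have hfirst : u ^ n * (c₁ * (G - u)) ≤ -(c₁ * (1 - θ) * u ^ (n + 1)) :=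
    calc u ^ n * (c₁ * (G - u)) ≤ u ^ n * (c₁ * (θ * u - u)) := by gcongr
      _ = -(c₁ * (1 - θ) * u ^ (n + 1)) := by ring
  have hsecond : w ^ n * (c₂ * (G - w)) ≤ min c₁ c₂ * (1 - θ) / 2 * u ^ (n + 1) :=
    calc w ^ n * (c₂ * (G - w)) ≤ c₂ * (w ^ n * (θ * u - w)) := by
          rw [mul_left_comm]; gcongr
      _ ≤ c₂ * (θ * u) ^ (n + 1) := by
          gcongr; exact pow_mul_sub_le_pow_succ n (by positivity) hw
      _ = c₂ * θ ^ (n + 1) * u ^ (n + 1) := by ring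
      _ ≤ max c₁ c₂ * θ ^ (n + 1) * u ^ (n + 1) := by gcongr; exact le_max_right _ _
      _ ≤ min c₁ c₂ * (1 - θ) / 2 * u ^ (n + 1) := by gcongr
  have hc₁min : min c₁ c₂ * (1 - θ) ≤ c₁ * (1 - θ) := by gcongr; exact min_le_left _ _
  have hwu' : w ^ (n + 1) ≤ u ^ (n + 1) := by gcongr
  have hκ : 0 ≤ min c₁ c₂ * (1 - θ) := mul_nonneg (le_min hc₁ hc₂) hθ
  nlinarith [mul_le_mul_of_nonneg_right hc₁min (pow_nonneg hu (n + 1)),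
    mul_le_mul_of_nonneg_left hwu' hκ]

theorem pow_mul_relaxation_add_le {c₁ c₂ θ u w G : ℝ} (n : ℕ) (hc₁ : 0 ≤ c₁)
    (hc₂ : 0 ≤ c₂) (hθ₀ : 0 ≤ θ) (hθ₁ : θ ≤ 1) (hu : 0 ≤ u) (hw : 0 ≤ w)
    (hG : G ≤ θ * max u w) (hn : max c₁ c₂ * θ ^ (n + 1) ≤ min c₁ c₂ * (1 - θ) / 2) :
    u ^ n * (c₁ * (G - u)) + w ^ n * (c₂ * (G - w)) ≤
      -(min c₁ c₂ * (1 - θ) / 4 * (u ^ (n + 1) + w ^ (n + 1))) := by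
  rcases le_total w u with h | h
  · exact pow_mul_relaxation_add_le_of_le n hc₁ hc₂ hθ₀ hθ₁ hw h (by rwa [max_eq_left h] at hG) hn
  · rw [add_comm, add_comm (u ^ (n + 1)), min_comm]
    rw [max_comm, min_comm] at hn
    exact pow_mul_relaxation_add_le_of_le n hc₂ hc₁ hθ₀ hθ₁ hu h (by rwa [max_eq_right h] at hG) hn

theorem tendsto_zero_of_hasDerivAt_le_neg_mul {Φ Φ' : ℝ → ℝ} {K : ℝ} (hK : 0 < K)
    (hΦ : ∀ t, 0 ≤ t → 0 ≤ Φ t) (hd : ∀ t, 0 ≤ t → HasDerivAt Φ (Φ' t) t)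
    (hle : ∀ t, 0 ≤ t → Φ' t ≤ -K * Φ t) : Tendsto Φ atTop (𝓝 0) := by
  have hbound : ∀ t, 0 ≤ t → Φ t ≤ Φ 0 * exp (-K * t) := by
    intro t ht
    have := le_gronwallBound_of_liminf_deriv_right_le (K := -K) (ε := 0)
      (fun s hs => (hd s hs.1).continuousAt.continuousWithinAt)
      (fun s hs r hr => (hd s hs.1).hasDerivWithinAt.liminf_right_slope_le hr)
      le_rfl (fun s hs => by simpa using hle s hs.1) t ⟨ht, le_rfl⟩
    rwa [gronwallBound_ε0, sub_zero] at this
  have hexp : Tendsto (fun t => Φ 0 * exp (-K * t)) atTop (𝓝 0) := by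
    simpa using (tendsto_exp_atBot.comp
      (tendsto_id.const_mul_atTop_of_neg (neg_neg_of_pos hK))).const_mul (Φ 0)
  exact squeeze_zero' (eventually_atTop.2 ⟨0, hΦ⟩) (eventually_atTop.2 ⟨0, hbound⟩) hexp

theorem tendsto_zero_of_tendsto_pow_zero {α : Type*} {l : Filter α} {u : α → ℝ} {n : ℕ}
    (hn : n ≠ 0) (hu : ∀ᶠ t in l, 0 ≤ u t) (h : Tendsto (fun t => u t ^ n) l (𝓝 0)) :
    Tendsto u l (𝓝 0) := by
  have := h.rpow_const (p := (n⁻¹ : ℝ)) (Or.inr (by positivity))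
  rw [zero_rpow (by positivity)] at this
  exact this.congr' (hu.mono fun t ht => pow_rpow_inv_natCast ht hn)

theorem tendsto_zero_of_hasDerivAt_relaxation {u w G : ℝ → ℝ} {c₁ c₂ θ : ℝ} (hc₁ : 0 < c₁)
    (hc₂ : 0 < c₂) (hθ₀ : 0 ≤ θ) (hθ₁ : θ < 1) (hu : ∀ t, 0 ≤ t → 0 ≤ u t)
    (hw : ∀ t, 0 ≤ t → 0 ≤ w t) (hG : ∀ t, 0 ≤ t → G t ≤ θ * max (u t) (w t))
    (hdu : ∀ t, 0 ≤ t → HasDerivAt u (c₁ * (G t - u t)) t)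
    (hdw : ∀ t, 0 ≤ t → HasDerivAt w (c₂ * (G t - w t)) t) :
    Tendsto u atTop (𝓝 0) ∧ Tendsto w atTop (𝓝 0) := by
  obtain ⟨κ, hκ⟩ : ∃ κ, κ = min c₁ c₂ * (1 - θ) / 4 := ⟨_, rfl⟩
  have hκ₀ : 0 < κ := by
    have := lt_min hc₁ hc₂; have : 0 < 1 - θ := by linarith
    rw [hκ]; positivity
  have hmax : 0 < max c₁ c₂ := lt_max_of_lt_left hc₁
  -- a power sum `u ^ (n + 1) + w ^ (n + 1)` with `θ ^ (n + 1)` small is a Lyapunov function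
  obtain ⟨n, hn⟩ := exists_pow_lt_of_lt_one (show 0 < 2 * κ / max c₁ c₂ by positivity) hθ₁
  have hn' : max c₁ c₂ * θ ^ (n + 1) ≤ min c₁ c₂ * (1 - θ) / 2 :=
    calc max c₁ c₂ * θ ^ (n + 1) ≤ max c₁ c₂ * (2 * κ / max c₁ c₂) := by
          gcongr; exact (pow_le_pow_of_le_one hθ₀ hθ₁.le n.le_succ).trans hn.le
      _ = min c₁ c₂ * (1 - θ) / 2 := by rw [hκ]; field_simp; ring
  have hΦ : Tendsto (fun t => u t ^ (n + 1) + w t ^ (n + 1)) atTop (𝓝 0) := by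
    refine tendsto_zero_of_hasDerivAt_le_neg_mul (K := (n + 1) * κ) (by positivity)
      (fun t ht => by have := hu t ht; have := hw t ht; positivity)
      (fun t ht => ((hdu t ht).pow (n + 1)).add ((hdw t ht).pow (n + 1))) fun t ht => ?_
    have hsum := pow_mul_relaxation_add_le n hc₁.le hc₂.le hθ₀ hθ₁.le (hu t ht)
      (hw t ht) (hG t ht) hn'
    rw [← hκ] at hsum
    simp only [Nat.add_sub_cancel, Nat.cast_add, Nat.cast_one]
    calc _ = ((n : ℝ) + 1) * (u t ^ n * (c₁ * (G t - u t)) + w t ^ n * (c₂ * (G t - w t))) := by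
          ring
      _ ≤ ((n : ℝ) + 1) * -(κ * (u t ^ (n + 1) + w t ^ (n + 1))) := by gcongr
      _ = _ := by ring
  have hle : ∀ v : ℝ → ℝ, (∀ t, 0 ≤ t → 0 ≤ v t) →
      (∀ t, 0 ≤ t → v t ^ (n + 1) ≤ u t ^ (n + 1) + w t ^ (n + 1)) → Tendsto v atTop (𝓝 0) :=
    fun v hv hvΦ => tendsto_zero_of_tendsto_pow_zero n.succ_ne_zero
      (eventually_atTop.2 ⟨0, hv⟩) (squeeze_zero' (eventually_atTop.2 ⟨0, fun t ht => by
        have := hv t ht; positivity⟩) (eventually_atTop.2 ⟨0, hvΦ⟩) hΦ)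
  exact ⟨hle u hu fun t ht => le_add_of_nonneg_right (pow_nonneg (hw t ht) _),
    hle w hw fun t ht => le_add_of_nonneg_left (pow_nonneg (hu t ht) _)⟩

theorem stmt_7_general (r ρ β μM μF μS γ Λ φcrit : ℝ)
    (hr0 : 0 < r) (hr1 : r < 1) (hρ : 0 < ρ) (hβ : 0 < β)
    (hμM : 0 < μM) (hμF : 0 < μF) (hμS : 0 < μS) (hγ : 0 < γ)
    (hφpos : 0 < φcrit)
    (hφuniq : ∀ φ : ℝ, 0 < φ →
      1 + φ * (1 + Real.sqrt (1 + 2 / φ)) =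
        ((1 - r) * ρ / μF) * Real.exp (-(2 / (1 + Real.sqrt (1 + 2 / φ)))) → φ = φcrit)
    (hΛ : Λ > 2 * (μS / (β * γ)) * φcrit / (1 + ((1 - r) * ρ / μF) / (r * ρ / μM)))
    (M F : ℝ → ℝ)
    (hMnn : ∀ t, 0 ≤ t → 0 ≤ M t) (hFnn : ∀ t, 0 ≤ t → 0 ≤ F t)
    (hdM : ∀ t, 0 ≤ t →
      HasDerivAt M (r * ρ * (F t * M t / (M t + γ * (Λ / μS))) *
        Real.exp (-(β * (M t + F t))) - μM * M t) t)
    (hdF : ∀ t, 0 ≤ t →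
      HasDerivAt F ((1 - r) * ρ * (F t * M t / (M t + γ * (Λ / μS))) *
        Real.exp (-(β * (M t + F t))) - μF * F t) t) :
    Filter.Tendsto M Filter.atTop (nhds 0) ∧ Filter.Tendsto F Filter.atTop (nhds 0) := by
  set NM := r * ρ / μM
  set NF := (1 - r) * ρ / μF
  set A := γ * (Λ / μS)
  have hNM : 0 < NM := by positivity
  have hr : 0 < 1 - r := sub_pos.2 hr1
  have hNF : 0 < NF := by positivity
  have hA : 0 < A := by
    have : 0 < Λ := lt_trans (by positivity) hΛ
    positivity
  have hcrit : φcrit < β * (1 + NF / NM) * A / 2 := by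
    rw [gt_iff_lt, div_lt_iff₀ (by positivity)] at hΛ
    calc φcrit = β * γ / (2 * μS) * (2 * (μS / (β * γ)) * φcrit) := by field_simp
      _ < β * γ / (2 * μS) * (Λ * (1 + NF / NM)) := by gcongr
      _ = β * (1 + NF / NM) * A / 2 := by simp only [A]; field_simp
  obtain ⟨θ, hθ₀, hθ₁, hθ⟩ := exists_lt_one_forall_mul_profile_le hNF.le (by positivity) hA
    (fun φ hφ h => hφuniq φ hφ (sub_eq_zero.1 h)) hcrit
  have hlim := tendsto_zero_of_hasDerivAt_relaxation (u := fun t => M t / NM)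
    (w := fun t => F t / NF) (G := fun t => F t * M t / (M t + A) * exp (-(β * (M t + F t))))
    hμM hμF hθ₀ hθ₁ (fun t ht => div_nonneg (hMnn t ht) hNM.le)
    (fun t ht => div_nonneg (hFnn t ht) hNF.le)
    (fun t ht => mul_div_add_mul_exp_le_mul_max hNM hNF hA hβ.le (hMnn t ht) (hFnn t ht) hθ)
    (fun t ht => ((hdM t ht).div_const NM).congr_deriv (by simp only [NM]; field_simp))
    (fun t ht => ((hdF t ht).div_const NF).congr_deriv (by simp only [NF]; field_simp))
  have hM := (hlim.1.const_mul NM).congr fun t => mul_div_cancel₀ (M t) hNM.ne'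
  have hF := (hlim.2.const_mul NF).congr fun t => mul_div_cancel₀ (F t) hNF.ne'
  rw [mul_zero] at hM hF
  exact ⟨hM, hF⟩

theorem stmt_7 (r ρ β μM μF μS γ Λ φcrit : ℝ)
    (hr0 : 0 < r) (hr1 : r < 1) (hρ : 0 < ρ) (hβ : 0 < β)
    (hμM : 0 < μM) (hμF : 0 < μF) (hμS : 0 < μS) (hγ : 0 < γ)
    (hμ : μF ≤ μM)
    (hNF : 1 < (1 - r) * ρ / μF)
    (hφpos : 0 < φcrit)
    (hφroot : 1 + φcrit * (1 + Real.sqrt (1 + 2 / φcrit)) =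
      ((1 - r) * ρ / μF) * Real.exp (-(2 / (1 + Real.sqrt (1 + 2 / φcrit)))))
    (hφuniq : ∀ φ : ℝ, 0 < φ →
      1 + φ * (1 + Real.sqrt (1 + 2 / φ)) =
        ((1 - r) * ρ / μF) * Real.exp (-(2 / (1 + Real.sqrt (1 + 2 / φ)))) → φ = φcrit)
    (hΛ : Λ > 2 * (μS / (β * γ)) * φcrit / (1 + ((1 - r) * ρ / μF) / (r * ρ / μM)))
    (M F : ℝ → ℝ)
    (hMnn : ∀ t, 0 ≤ t → 0 ≤ M t) (hFnn : ∀ t, 0 ≤ t → 0 ≤ F t)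
    (hdM : ∀ t, 0 ≤ t →
      HasDerivAt M (r * ρ * (F t * M t / (M t + γ * (Λ / μS))) *
        Real.exp (-(β * (M t + F t))) - μM * M t) t)
    (hdF : ∀ t, 0 ≤ t →
      HasDerivAt F ((1 - r) * ρ * (F t * M t / (M t + γ * (Λ / μS))) *
        Real.exp (-(β * (M t + F t))) - μF * F t) t) :
    Filter.Tendsto M Filter.atTop (nhds 0) ∧ Filter.Tendsto F Filter.atTop (nhds 0) :=
  stmt_7_general r ρ β μM μF μS γ Λ φcrit hr0 hr1 hρ hβ hμM hμF hμS hγ hφpos hφuniq hΛ M F hMnn hFnn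
    hdM hdF
end

section
/- Let μ_S > 0, τ > 0, Λ > 0 and define M_S^per(t) := τΛ·e^{−μ_S(t − ⌊t/τ⌋τ)}/(1 − e^{−μ_Sτ}) for t ≥ 0. Then the mean value of 1/M_S^per over one period satisfies (1/τ)·∫_0^τ (1/M_S^per(t)) dt = 2(cosh(μ_Sτ) − 1)/(μ_S τ² Λ). -/
/-! On `[0, τ)` the floor term vanishes, so `1 / MSper` is a constant multiple of `exp (μS * t)`;
its integral then collapses to the cosh form through `(1 - e^{-x}) (e^x - 1) = 2 (cosh x - 1)`. -/

open MeasureTheory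

/-- The periodic sterile male population resulting from periodic impulsive releases. -/
noncomputable def MSper (μS τ Λ t : ℝ) : ℝ :=
  τ * Λ * Real.exp (-(μS * (t - (⌊t / τ⌋ : ℝ) * τ))) / (1 - Real.exp (-(μS * τ)))

theorem integral_exp_mul {c : ℝ} (hc : c ≠ 0) (a b : ℝ) :
    ∫ x in a..b, Real.exp (c * x) = (Real.exp (c * b) - Real.exp (c * a)) / c := by
  rw [intervalIntegral.integral_comp_mul_left Real.exp hc, integral_exp, smul_eq_mul,
    inv_mul_eq_div]

theorem one_sub_exp_neg_mul_exp_sub_one (x : ℝ) :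
    (1 - Real.exp (-x)) * (Real.exp x - 1) = 2 * (Real.cosh x - 1) := by
  have hx : Real.exp x * Real.exp (-x) = 1 := by rw [← Real.exp_add, add_neg_cancel, Real.exp_zero]
  rw [Real.cosh_eq]
  linear_combination -hx

theorem inv_MSper_of_mem_Ico {μS τ Λ t : ℝ} (ht : t ∈ Set.Ico 0 τ) :
    (MSper μS τ Λ t)⁻¹ = (1 - Real.exp (-(μS * τ))) / (τ * Λ) * Real.exp (μS * t) := by
  have hτ : 0 < τ := ht.1.trans_lt ht.2
  have hfloor : ⌊t / τ⌋ = 0 :=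
    Int.floor_eq_zero_iff.2 ⟨div_nonneg ht.1 hτ.le, (div_lt_one hτ).2 ht.2⟩
  rw [MSper, hfloor, Int.cast_zero, zero_mul, sub_zero]
  simp only [Real.exp_neg, div_eq_mul_inv, mul_inv, inv_inv]
  ring

theorem integral_inv_MSper {μS τ : ℝ} (hμS : μS ≠ 0) (hτ : 0 ≤ τ) (Λ : ℝ) :
    ∫ t in (0:ℝ)..τ, (MSper μS τ Λ t)⁻¹ =
      (1 - Real.exp (-(μS * τ))) * (Real.exp (μS * τ) - 1) / (μS * τ * Λ) := by
  have hae : ∀ᵐ t : ℝ, t ∈ Set.uIoc 0 τ →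
      (MSper μS τ Λ t)⁻¹ = (1 - Real.exp (-(μS * τ))) / (τ * Λ) * Real.exp (μS * t) := by
    filter_upwards [Measure.ae_ne volume τ] with t hne ht
    rw [Set.uIoc_of_le hτ] at ht
    exact inv_MSper_of_mem_Ico ⟨ht.1.le, ht.2.lt_of_ne hne⟩
  rw [intervalIntegral.integral_congr_ae hae, intervalIntegral.integral_const_mul,
    integral_exp_mul hμS, mul_zero, Real.exp_zero]
  field_simp

theorem stmt_8_general (μS τ Λ : ℝ) (hμS : 0 < μS) (hτ : 0 < τ) :
    (1 / τ) * ∫ t in (0:ℝ)..τ, 1 / MSper μS τ Λ t =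
      2 * (Real.cosh (μS * τ) - 1) / (μS * τ ^ 2 * Λ) := by
  simp only [one_div]
  rw [integral_inv_MSper hμS.ne' hτ.le, one_sub_exp_neg_mul_exp_sub_one]
  field_simp

theorem stmt_8 (μS τ Λ : ℝ) (hμS : 0 < μS) (hτ : 0 < τ) (hΛ : 0 < Λ) :
    (1 / τ) * ∫ t in (0:ℝ)..τ, 1 / MSper μS τ Λ t =
      2 * (Real.cosh (μS * τ) - 1) / (μS * τ ^ 2 * Λ) :=
  stmt_8_general μS τ Λ hμS hτ
end

section
/- Let τ > 0, Λ > 0, and suppose the mean value ⟨1/M_S^per⟩ := (1/τ)∫_0^τ (1/M_S^per(t)) dt satisfies ⟨1/M_S^per⟩ < eβγ/N_F. Then every solution of the τ-periodic SIT system with nonnegative initial data converges to (0,0): if M, F : [0,∞) → ℝ are continuously differentiable, nonnegative, and satisfy M'(t) = rρ·(F(t)M(t)/(M(t)+γM_S^per(t)))·e^{−β(M(t)+F(t))} − μ_M M(t) and F'(t) = (1−r)ρ·(F(t)M(t)/(M(t)+γM_S^per(t)))·e^{−β(M(t)+F(t))} − μ_F F(t) for all t ≥ 0, then F((n+1)τ)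 ≤ exp((((1−r)ρ/(eβγ))·⟨1/M_S^per⟩ − μ_F)·τ)·F(nτ) for every n ∈ ℕ, and M(t) → 0 and F(t) → 0 as t → +∞. -/
open Real MeasureTheory Filter Topology Set intervalIntegral

theorem mul_exp_neg_mul_le {β : ℝ} (hβ : 0 < β) (x : ℝ) :
    x * exp (-(β * x)) ≤ 1 / (exp 1 * β) := by
  have h := add_one_le_exp (β * x - 1)
  calc x * exp (-(β * x)) = β * x * exp (-(β * x)) / β := by field_simp
    _ ≤ exp (β * x - 1) * exp (-(β * x)) / β := by gcongr; linarith
    _ = 1 / (exp 1 * β) := by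
      rw [← exp_add, show β * x - 1 + -(β * x) = -1 by ring, exp_neg]; field_simp

theorem mul_mating_term_le {k β γ m f S : ℝ} (hk : 0 ≤ k) (hβ : 0 < β) (hγ : 0 < γ)
    (hm : 0 ≤ m) (hf : 0 ≤ f) (hS : 0 < S) :
    k * (f * m / (m + γ * S)) * exp (-(β * (m + f))) ≤ k / (exp 1 * β * γ) * (1 / S) * f := by
  have hf' : exp (-(β * f)) ≤ 1 := exp_le_one_iff.2 (by nlinarith)
  calc k * (f * m / (m + γ * S)) * exp (-(β * (m + f)))
      = k * (f / (m + γ * S)) * (m * exp (-(β * m))) * exp (-(β * f)) := by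
        rw [show -(β * (m + f)) = -(β * m) + -(β * f) by ring, exp_add]; ring
    _ ≤ k * (f / (γ * S)) * (1 / (exp 1 * β)) * 1 := by
        gcongr
        · linarith
        · exact mul_exp_neg_mul_le hβ m
    _ = k / (exp 1 * β * γ) * (1 / S) * f := by field_simp

theorem le_mul_exp_integral_of_hasDerivAt_le {f f' a : ℝ → ℝ} {s u : ℝ} (hsu : s ≤ u)
    (hf : ContinuousOn f (Icc s u)) (hf' : ∀ t ∈ Ioo s u, HasDerivAt f (f' t) t)
    (hle : ∀ t ∈ Ioo s u, f' t ≤ a t * f t)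
    (ha : ContinuousOn a (Ioo s u)) (hai : IntervalIntegrable a volume s u) :
    f u ≤ f s * exp (∫ x in s..u, a x) := by
  set A : ℝ → ℝ := fun t => ∫ x in s..t, a x
  have hA : ContinuousOn A (Icc s u) := by
    simpa [uIcc_of_le hsu] using continuousOn_primitive_interval' hai left_mem_uIcc
  have hA' : ∀ t ∈ Ioo s u, HasDerivAt A (a t) t := fun t ht =>
    integral_hasDerivAt_right
      (hai.mono_set (uIcc_subset_uIcc left_mem_uIcc (mem_uIcc_of_le ht.1.le ht.2.le)))
      (ha.stronglyMeasurableAtFilter isOpen_Ioo t ht) (ha.continuousAt (Ioo_mem_nhds ht.1 ht.2))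
  have hanti : AntitoneOn (fun t => f t * exp (-A t)) (Icc s u) := by
    refine antitoneOn_of_hasDerivWithinAt_nonpos (convex_Icc s u) (hf.mul hA.neg.rexp)
      (f' := fun t => f' t * exp (-A t) + f t * (exp (-A t) * -a t))
      (fun t ht => ?_) (fun t ht => ?_) <;> rw [interior_Icc] at ht
    · exact ((hf' t ht).mul (hA' t ht).neg.exp).hasDerivWithinAt
    · have := hle t ht
      have := exp_pos (-A t)
      nlinarith
  have key := hanti (left_mem_Icc.2 hsu) (right_mem_Icc.2 hsu) hsu
  simp only [A, integral_same, neg_zero, exp_zero, mul_one] at key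
  rwa [← le_div_iff₀ (exp_pos _), div_eq_mul_inv, ← exp_neg, neg_neg] at key

section PeriodicCoefficient

variable {F F' a : ℝ → ℝ} {τ : ℝ}

theorem le_mul_exp_integral_of_periodic (hper : Function.Periodic a τ)
    (ha : ContinuousOn a (Ioo 0 τ)) (hai : IntervalIntegrable a volume 0 τ)
    (hF : ∀ t, 0 ≤ t → HasDerivAt F (F' t) t) (hle : ∀ t, 0 ≤ t → F' t ≤ a t * F t)
    (n : ℕ) {s : ℝ} (hs : s ∈ Icc 0 τ) :
    F (n * τ + s) ≤ F (n * τ) * exp (∫ x in 0..s, a x) := by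
  have hnτ : 0 ≤ n * τ := by have := hs.1.trans hs.2; positivity
  have hshift : ∀ x, 0 ≤ x → HasDerivAt (fun x => F (n * τ + x)) (F' (n * τ + x)) x :=
    fun x hx => (hF _ (by linarith)).comp_const_add _ x
  simpa using le_mul_exp_integral_of_hasDerivAt_le hs.1
    (fun x hx => (hshift x hx.1).continuousAt.continuousWithinAt)
    (fun x hx => hshift x hx.1.le)
    (fun x hx => by simpa [add_comm, (hper.nat_mul n) x] using hle (n * τ + x) (by linarith [hx.1]))
    (ha.mono (Ioo_subset_Ioo_right hs.2))
    (hai.mono_set (uIcc_subset_uIcc left_mem_uIcc (mem_uIcc_of_le hs.1 hs.2)))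

/-- Over each period `F` contracts by the factor `exp (∫₀^τ a) < 1`, while inside a period it
grows by at most `exp (|A| τ)`. -/
theorem tendsto_zero_of_hasDerivAt_le_periodic_mul {A : ℝ} (hτ : 0 < τ)
    (hper : Function.Periodic a τ) (ha : ContinuousOn a (Ioo 0 τ))
    (hai : IntervalIntegrable a volume 0 τ) (hA : ∀ t, a t ≤ A) (hneg : ∫ x in 0..τ, a x < 0)
    (hF0 : ∀ t, 0 ≤ t → 0 ≤ F t) (hF : ∀ t, 0 ≤ t → HasDerivAt F (F' t) t)
    (hle : ∀ t, 0 ≤ t → F' t ≤ a t * F t) :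
    Tendsto F atTop (𝓝 0) := by
  set q := exp (∫ x in 0..τ, a x)
  have hgrid : ∀ n : ℕ, F (n * τ) ≤ F 0 * q ^ n := by
    intro n
    induction n with
    | zero => simp
    | succ n ih =>
      calc F ((n + 1 : ℕ) * τ) = F (n * τ + τ) := by push_cast; ring_nf
        _ ≤ F (n * τ) * q := le_mul_exp_integral_of_periodic hper ha hai hF hle n ⟨hτ.le, le_rfl⟩
        _ ≤ F 0 * q ^ n * q := by gcongr
        _ = F 0 * q ^ (n + 1) := by ring
  have hbound : ∀ t, 0 ≤ t → F t ≤ F 0 * exp (|A| * τ) * q ^ ⌊t / τ⌋₊ := by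
    intro t ht
    set n := ⌊t / τ⌋₊
    have h1 : n * τ ≤ t := (le_div_iff₀ hτ).1 (Nat.floor_le (div_nonneg ht hτ.le))
    have h2 : t < n * τ + τ := by
      have := (div_lt_iff₀ hτ).1 (Nat.lt_floor_add_one (t / τ)); linarith
    have hint : ∫ x in 0..(t - n * τ), a x ≤ |A| * τ :=
      calc ∫ x in 0..(t - n * τ), a x ≤ ∫ _ in 0..(t - n * τ), A :=
            integral_mono_on (by linarith)
              (hai.mono_set (uIcc_subset_uIcc left_mem_uIcc (mem_uIcc_of_le (by linarith)
                (by linarith)))) intervalIntegrable_const (fun x _ => hA x)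
        _ = A * (t - n * τ) := by simp [mul_comm]
        _ ≤ |A| * τ := mul_le_mul (le_abs_self A) (by linarith) (by linarith) (abs_nonneg A)
    have hF00 := hF0 0 le_rfl
    calc F t = F (n * τ + (t - n * τ)) := by ring_nf
      _ ≤ F (n * τ) * exp (∫ x in 0..(t - n * τ), a x) :=
          le_mul_exp_integral_of_periodic hper ha hai hF hle n ⟨by linarith, by linarith⟩
      _ ≤ F 0 * q ^ n * exp (|A| * τ) := by gcongr; exact hgrid n
      _ = F 0 * exp (|A| * τ) * q ^ n := by ring
  have hlim : Tendsto (fun t => F 0 * exp (|A| * τ) * q ^ ⌊t / τ⌋₊) atTop (𝓝 0) := by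
    simpa using ((tendsto_pow_atTop_nhds_zero_of_lt_one (exp_pos _).le (exp_lt_one_iff.2 hneg)).comp
      (tendsto_nat_floor_atTop.comp (tendsto_id.atTop_div_const hτ))).const_mul
      (F 0 * exp (|A| * τ))
  exact tendsto_of_tendsto_of_tendsto_of_le_of_le' tendsto_const_nhds hlim
    (eventually_atTop.2 ⟨0, hF0⟩) (eventually_atTop.2 ⟨0, hbound⟩)

end PeriodicCoefficient

/-- Once `g < μ ε`, Grönwall applied to `y - ε` gives `y ≤ ε + O(e^{-μ t})`. -/
theorem tendsto_zero_of_hasDerivAt_le_sub_mul {y y' g : ℝ → ℝ} {μ : ℝ} (hμ : 0 < μ)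
    (hg : Tendsto g atTop (𝓝 0)) (hy0 : ∀ t, 0 ≤ t → 0 ≤ y t)
    (hy : ∀ t, 0 ≤ t → HasDerivAt y (y' t) t) (hle : ∀ t, 0 ≤ t → y' t ≤ g t - μ * y t) :
    Tendsto y atTop (𝓝 0) := by
  refine tendsto_order.2 ⟨fun b hb => eventually_atTop.2 ⟨0, fun t ht => hb.trans_le (hy0 t ht)⟩,
    fun b hb => ?_⟩
  obtain ⟨T, hT⟩ := eventually_atTop.1
    ((hg.eventually (gt_mem_nhds (mul_pos hμ (half_pos hb)))).and (eventually_ge_atTop 0))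
  have hdecay : ∀ t, T ≤ t → y t - b / 2 ≤ (y T - b / 2) * exp (-(μ * (t - T))) := by
    intro t ht
    have hT0 := (hT T le_rfl).2
    have := le_mul_exp_integral_of_hasDerivAt_le (f := fun x => y x - b / 2) (a := fun _ => -μ) ht
      (fun x hx => ((hy x (hT0.trans hx.1)).continuousAt.sub
        continuousAt_const).continuousWithinAt)
      (fun x hx => (hy x (hT0.trans hx.1.le)).sub_const (b / 2))
      (fun x hx => by
        have := hT x hx.1.le
        have := hle x this.2
        nlinarith)
      continuousOn_const intervalIntegrable_const
    simpa [mul_comm, sub_eq_add_neg] using this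
  have hlim : Tendsto (fun t => (y T - b / 2) * exp (-(μ * (t - T)))) atTop (𝓝 0) := by
    simpa [sub_eq_add_neg] using (tendsto_exp_neg_atTop_nhds_zero.comp
      ((tendsto_atTop_add_const_right _ (-T) tendsto_id).const_mul_atTop hμ)).const_mul
      (y T - b / 2)
  filter_upwards [eventually_ge_atTop T, hlim.eventually (gt_mem_nhds (half_pos hb))]
    with t ht hsmall
  linarith [hdecay t ht]

section MSper

variable {μS τ Λ : ℝ}

theorem MSper_periodic (hτ : τ ≠ 0) : Function.Periodic (MSper μS τ Λ) τ := by
  intro t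
  have h : (t + τ) / τ = t / τ + 1 := by field_simp
  simp only [MSper, h, Int.floor_add_one]
  push_cast
  ring_nf

theorem MSper_eq_of_mem_Ico (hτ : 0 < τ) {t : ℝ} (ht : t ∈ Ico 0 τ) :
    MSper μS τ Λ t = τ * Λ * exp (-(μS * t)) / (1 - exp (-(μS * τ))) := by
  have : ⌊t / τ⌋ = 0 := Int.floor_eq_zero_iff.2
    ⟨div_nonneg ht.1 hτ.le, (div_lt_one hτ).2 ht.2⟩
  simp [MSper, this]

theorem one_sub_exp_neg_mul_pos (hμS : 0 < μS) (hτ : 0 < τ) : 0 < 1 - exp (-(μS * τ)) :=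
  sub_pos.2 (exp_lt_one_iff.2 (neg_lt_zero.2 (mul_pos hμS hτ)))

theorem MSper_pos (hμS : 0 < μS) (hτ : 0 < τ) (hΛ : 0 < Λ) (t : ℝ) : 0 < MSper μS τ Λ t := by
  have := one_sub_exp_neg_mul_pos hμS hτ
  unfold MSper; positivity

theorem one_div_MSper_le (hμS : 0 < μS) (hτ : 0 < τ) (hΛ : 0 < Λ) (t : ℝ) :
    1 / MSper μS τ Λ t ≤ (1 - exp (-(μS * τ))) / (τ * Λ * exp (-(μS * τ))) := by
  have := one_sub_exp_neg_mul_pos hμS hτ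
  have hfract : t - ⌊t / τ⌋ * τ < τ := by
    have := (div_lt_iff₀ hτ).1 (Int.lt_floor_add_one (t / τ))
    linarith
  rw [MSper, one_div_div]
  gcongr

theorem continuousOn_one_div_MSper_Ioo (hμS : 0 < μS) (hτ : 0 < τ) (hΛ : 0 < Λ) :
    ContinuousOn (fun t => 1 / MSper μS τ Λ t) (Ioo 0 τ) :=
  continuousOn_const.div
    (ContinuousOn.congr (f := fun t => τ * Λ * exp (-(μS * t)) / (1 - exp (-(μS * τ))))
      (by fun_prop) fun _ ht => MSper_eq_of_mem_Ico hτ (Ioo_subset_Ico_self ht))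
    fun t _ => (MSper_pos hμS hτ hΛ t).ne'

theorem intervalIntegrable_one_div_MSper (hμS : 0 < μS) (hτ : 0 < τ) (hΛ : 0 < Λ) (u v : ℝ) :
    IntervalIntegrable (fun t => 1 / MSper μS τ Λ t) volume u v :=
  intervalIntegrable_const.mono_fun' (Measurable.aestronglyMeasurable (by unfold MSper; fun_prop))
    (ae_of_all _ fun t => (norm_of_nonneg (one_div_pos.2 (MSper_pos hμS hτ hΛ t)).le).trans_le
      (one_div_MSper_le hμS hτ hΛ t))

end MSper

theorem stmt_10_general (r ρ β μM μF μS γ τ Λ : ℝ)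
    (hr0 : 0 < r) (hr1 : r < 1) (hρ : 0 < ρ) (hβ : 0 < β)
    (hμM : 0 < μM) (hμF : 0 < μF) (hμS : 0 < μS) (hγ : 0 < γ)
    (hτ : 0 < τ) (hΛ : 0 < Λ)
    (hmean : (1 / τ) * ∫ t in (0:ℝ)..τ, 1 / MSper μS τ Λ t <
      Real.exp 1 * β * γ / ((1 - r) * ρ / μF))
    (M F : ℝ → ℝ)
    (hMnn : ∀ t, 0 ≤ t → 0 ≤ M t) (hFnn : ∀ t, 0 ≤ t → 0 ≤ F t)
    (hdM : ∀ t, 0 ≤ t →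
      HasDerivAt M (r * ρ * (F t * M t / (M t + γ * MSper μS τ Λ t)) *
        Real.exp (-(β * (M t + F t))) - μM * M t) t)
    (hdF : ∀ t, 0 ≤ t →
      HasDerivAt F ((1 - r) * ρ * (F t * M t / (M t + γ * MSper μS τ Λ t)) *
        Real.exp (-(β * (M t + F t))) - μF * F t) t) :
    (∀ n : ℕ, F (((n : ℝ) + 1) * τ) ≤
      Real.exp (((1 - r) * ρ / (Real.exp 1 * β * γ) *
        ((1 / τ) * ∫ t in (0:ℝ)..τ, 1 / MSper μS τ Λ t) - μF) * τ) * F ((n : ℝ) * τ)) ∧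
    Filter.Tendsto M Filter.atTop (nhds 0) ∧ Filter.Tendsto F Filter.atTop (nhds 0) := by
  have h1r : 0 < 1 - r := sub_pos.2 hr1
  set c := (1 - r) * ρ / (exp 1 * β * γ)
  have hc : 0 < c := by positivity
  set a : ℝ → ℝ := fun t => c * (1 / MSper μS τ Λ t) - μF
  have hSint := intervalIntegrable_one_div_MSper hμS hτ hΛ 0 τ
  have hper : Function.Periodic a τ := fun t => by simp only [a, MSper_periodic hτ.ne' t]
  have hcont : ContinuousOn a (Ioo 0 τ) :=
    (continuousOn_const.mul (continuousOn_one_div_MSper_Ioo hμS hτ hΛ)).sub continuousOn_const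
  have hai : IntervalIntegrable a volume 0 τ := (hSint.const_mul c).sub intervalIntegrable_const
  have hint : ∫ x in 0..τ, a x = (c * ((1 / τ) * ∫ t in 0..τ, 1 / MSper μS τ Λ t) - μF) * τ := by
    rw [integral_sub (hSint.const_mul c) intervalIntegrable_const,
      intervalIntegral.integral_const_mul, intervalIntegral.integral_const, sub_zero, smul_eq_mul]
    field_simp
  have hneg : ∫ x in 0..τ, a x < 0 := by
    have hμF' : c * (exp 1 * β * γ / ((1 - r) * ρ / μF)) = μF := by simp only [c]; field_simp
    rw [hint]
    nlinarith [mul_lt_mul_of_pos_left hmean hc]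
  have hFa : ∀ t, 0 ≤ t → (1 - r) * ρ * (F t * M t / (M t + γ * MSper μS τ Λ t)) *
      exp (-(β * (M t + F t))) - μF * F t ≤ a t * F t := fun t ht => by
    simp only [a, c]
    linear_combination mul_mating_term_le (mul_pos h1r hρ).le hβ hγ (hMnn t ht) (hFnn t ht)
      (MSper_pos hμS hτ hΛ t)
  have hFlim := tendsto_zero_of_hasDerivAt_le_periodic_mul hτ hper hcont hai
    (fun t => sub_le_sub_right (mul_le_mul_of_nonneg_left (one_div_MSper_le hμS hτ hΛ t) hc.le) μF)
    hneg hFnn hdF hFa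
  refine ⟨fun n => ?_, ?_, hFlim⟩
  · have := le_mul_exp_integral_of_periodic hper hcont hai hdF hFa n ⟨hτ.le, le_rfl⟩
    rwa [hint, ← add_one_mul, mul_comm (F _)] at this
  · set B := (1 - exp (-(μS * τ))) / (τ * Λ * exp (-(μS * τ)))
    refine tendsto_zero_of_hasDerivAt_le_sub_mul hμM
      (by simpa using hFlim.const_mul (r * ρ / (exp 1 * β * γ) * B)) hMnn hdM fun t ht => ?_
    have hFM := mul_mating_term_le (mul_pos hr0 hρ).le hβ hγ (hMnn t ht) (hFnn t ht)
      (MSper_pos hμS hτ hΛ t)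
    have hB := mul_le_mul_of_nonneg_left (one_div_MSper_le hμS hτ hΛ t)
      (mul_nonneg (by positivity : 0 ≤ r * ρ / (exp 1 * β * γ)) (hFnn t ht))
    linear_combination hFM + hB

theorem stmt_10 (r ρ β μM μF μS γ τ Λ : ℝ)
    (hr0 : 0 < r) (hr1 : r < 1) (hρ : 0 < ρ) (hβ : 0 < β)
    (hμM : 0 < μM) (hμF : 0 < μF) (hμS : 0 < μS) (hγ : 0 < γ)
    (hμ : μF ≤ μM) (hτ : 0 < τ) (hΛ : 0 < Λ)
    (hmean : (1 / τ) * ∫ t in (0:ℝ)..τ, 1 / MSper μS τ Λ t <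
      Real.exp 1 * β * γ / ((1 - r) * ρ / μF))
    (M F : ℝ → ℝ)
    (hMnn : ∀ t, 0 ≤ t → 0 ≤ M t) (hFnn : ∀ t, 0 ≤ t → 0 ≤ F t)
    (hdM : ∀ t, 0 ≤ t →
      HasDerivAt M (r * ρ * (F t * M t / (M t + γ * MSper μS τ Λ t)) *
        Real.exp (-(β * (M t + F t))) - μM * M t) t)
    (hdF : ∀ t, 0 ≤ t →
      HasDerivAt F ((1 - r) * ρ * (F t * M t / (M t + γ * MSper μS τ Λ t)) *
        Real.exp (-(β * (M t + F t))) - μF * F t) t) :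
    (∀ n : ℕ, F (((n : ℝ) + 1) * τ) ≤
      Real.exp (((1 - r) * ρ / (Real.exp 1 * β * γ) *
        ((1 / τ) * ∫ t in (0:ℝ)..τ, 1 / MSper μS τ Λ t) - μF) * τ) * F ((n : ℝ) * τ)) ∧
    Filter.Tendsto M Filter.atTop (nhds 0) ∧ Filter.Tendsto F Filter.atTop (nhds 0) :=
  stmt_10_general r ρ β μM μF μS γ τ Λ hr0 hr1 hρ hβ hμM hμF hμS hγ hτ hΛ hmean M F hMnn hFnn hdM
    hdF
end

section
/- Let k be a real number with 0 < k < 1/N_F, and let M_S : [0,∞) → ℝ be a nonnegative continuous function such that γM_S(t) ≥ (1/k − 1)·M(t) for all t ≥ 0. If M, F : [0,∞) → ℝ are continuously differentiable, nonnegative, and satisfy M'(t) = rρ·(F(t)M(t)/(M(t)+γM_S(t)))·e^{−β(M(t)+F(t))} − μ_M M(t) and F'(t) = (1−r)ρ·(F(t)M(t)/(M(t)+γM_S(t)))·e^{−β(M(t)+F(t))} − μ_F F(t) for all t ≥ 0, then (M(t), F(t)) converges exponentially to (0,0): there exist C > 0 and ε > 0 with M(t) + F(t) ≤ C e^{−εt}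 for all t ≥ 0. -/
/-!
The bound `γ M_S ≥ (1/k - 1) M` gives `M + γ M_S ≥ M / k`, so the incidence term
`F M / (M + γ M_S) · e^{-β(M+F)}` is at most `k F`. The system is then dominated by a linear
cooperative one whose female equation has net rate `(1-r)ρk - μ_F < 0`, and a weighted sum
`V = M + c F` with `c` large enough is a Lyapunov function with `V' ≤ -ε V`.
-/

open Real

theorem le_mul_exp_neg_of_hasDerivAt_le {V V' : ℝ → ℝ} {ε : ℝ}
    (hV : ∀ t, 0 ≤ t → HasDerivAt V (V' t) t) (hV' : ∀ t, 0 ≤ t → V' t ≤ -ε * V t)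
    {t : ℝ} (ht : 0 ≤ t) : V t ≤ V 0 * exp (-(ε * t)) := by
  set g : ℝ → ℝ := fun s => V s * exp (ε * s)
  have hg : ∀ s, 0 ≤ s → HasDerivAt g (V' s * exp (ε * s) + V s * (exp (ε * s) * ε)) s :=
    fun s hs => (hV s hs).mul (by simpa using ((hasDerivAt_id s).const_mul ε).exp)
  have hanti : AntitoneOn g (Set.Ici 0) := by
    refine antitoneOn_of_hasDerivWithinAt_nonpos (convex_Ici 0)
      (fun s hs => (hg s hs).continuousAt.continuousWithinAt)
      (fun s hs => (hg s (interior_subset hs)).hasDerivWithinAt) fun s hs => ?_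
    have hs : 0 ≤ s := interior_subset hs
    nlinarith [mul_le_mul_of_nonneg_right (hV' s hs) (exp_pos (ε * s)).le]
  have hgt : V t * exp (ε * t) ≤ V 0 := by simpa [g] using hanti Set.self_mem_Ici ht ht
  rwa [exp_neg, ← div_eq_mul_inv, le_div_iff₀ (exp_pos _)]

theorem exists_lyapunov_weight {a b μM μF : ℝ} (ha : 0 ≤ a) (hμM : 0 < μM) (hb : b < μF) :
    ∃ c ≥ (1 : ℝ), ∃ ε > 0, ε ≤ μM ∧ a + c * b ≤ c * (μF - ε) := by
  set δ := μF - b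
  have hδ : 0 < δ := sub_pos.2 hb
  refine ⟨1 + 2 * a / δ, by linarith [div_nonneg (mul_nonneg two_pos.le ha) hδ.le],
    min μM (δ / 2), lt_min hμM (half_pos hδ), min_le_left _ _, ?_⟩
  have hε : min μM (δ / 2) ≤ δ / 2 := min_le_right _ _
  have hc : (1 + 2 * a / δ) * (δ / 2) = δ / 2 + a := by field_simp
  nlinarith [mul_le_mul_of_nonneg_left hε (by positivity : (0 : ℝ) ≤ 1 + 2 * a / δ)]

theorem saturated_incidence_le {k β M F S : ℝ} (hk : 0 < k) (hβ : 0 ≤ β) (hM : 0 ≤ M)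
    (hF : 0 ≤ F) (hS : (1 / k - 1) * M ≤ S) :
    F * M / (M + S) * exp (-(β * (M + F))) ≤ k * F := by
  have hfrac : F * M / (M + S) ≤ k * F := by
    rcases hM.eq_or_lt with rfl | hM
    · simpa using mul_nonneg hk.le hF
    · have hden : M / k ≤ M + S := by
        have : M / k = M + (1 / k - 1) * M := by field_simp; ring
        linarith
      calc F * M / (M + S) ≤ F * M / (M / k) :=
            div_le_div_of_nonneg_left (mul_nonneg hF hM.le) (by positivity) hden
        _ = k * F := by field_simp
  have he : exp (-(β * (M + F))) ≤ 1 := exp_le_one_iff.2 (by nlinarith)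
  calc F * M / (M + S) * exp (-(β * (M + F))) ≤ k * F * exp (-(β * (M + F))) :=
        mul_le_mul_of_nonneg_right hfrac (exp_pos _).le
    _ ≤ k * F := mul_le_of_le_one_right (mul_nonneg hk.le hF) he

theorem weighted_sum_deriv_le {r ρ μM μF k c ε M F I : ℝ} (hr0 : 0 ≤ r) (hr1 : r ≤ 1)
    (hρ : 0 ≤ ρ) (hc : 0 ≤ c) (hM : 0 ≤ M) (hF : 0 ≤ F) (hI : I ≤ k * F) (hεM : ε ≤ μM)
    (hcε : r * ρ * k + c * ((1 - r) * ρ * k) ≤ c * (μF - ε)) :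
    (r * ρ * I - μM * M) + c * ((1 - r) * ρ * I - μF * F) ≤ -ε * (M + c * F) := by
  have hcoef : 0 ≤ (r + c * (1 - r)) * ρ := by
    have : 0 ≤ c * (1 - r) := mul_nonneg hc (by linarith)
    positivity
  nlinarith [mul_le_mul_of_nonneg_left hI hcoef, mul_nonneg (sub_nonneg.2 hεM) hM,
    mul_le_mul_of_nonneg_right hcε hF]

theorem stmt_11_general (r ρ β μM μF γ : ℝ)
    (hr0 : 0 < r) (hr1 : r < 1) (hρ : 0 < ρ) (hβ : 0 < β)
    (hμM : 0 < μM) (hμF : 0 < μF)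
    (k : ℝ) (hk0 : 0 < k) (hk1 : k < 1 / ((1 - r) * ρ / μF))
    (M F MS : ℝ → ℝ)
    (hMSk : ∀ t, 0 ≤ t → γ * MS t ≥ (1 / k - 1) * M t)
    (hMnn : ∀ t, 0 ≤ t → 0 ≤ M t) (hFnn : ∀ t, 0 ≤ t → 0 ≤ F t)
    (hdM : ∀ t, 0 ≤ t →
      HasDerivAt M (r * ρ * (F t * M t / (M t + γ * MS t)) *
        Real.exp (-(β * (M t + F t))) - μM * M t) t)
    (hdF : ∀ t, 0 ≤ t →
      HasDerivAt F ((1 - r) * ρ * (F t * M t / (M t + γ * MS t)) *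
        Real.exp (-(β * (M t + F t))) - μF * F t) t) :
    ∃ C > 0, ∃ ε > 0, ∀ t, 0 ≤ t → M t + F t ≤ C * Real.exp (-(ε * t)) := by
  have hfemale_decay : (1 - r) * ρ * k < μF := by
    have := (lt_div_iff₀ (by have := sub_pos.2 hr1; positivity)).1 hk1
    rw [mul_div_assoc', div_lt_one hμF] at this
    linarith
  obtain ⟨c, hc1, ε, hε, hεM, hcε⟩ :=
    exists_lyapunov_weight (by positivity : 0 ≤ r * ρ * k) hμM hfemale_decay
  set I : ℝ → ℝ := fun t => F t * M t / (M t + γ * MS t) * exp (-(β * (M t + F t)))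
  have hderiv : ∀ t, 0 ≤ t → HasDerivAt (fun t => M t + c * F t)
      ((r * ρ * I t - μM * M t) + c * ((1 - r) * ρ * I t - μF * F t)) t := fun t ht =>
    ((hdM t ht).add ((hdF t ht).const_mul c)).congr_deriv (by simp only [I]; ring)
  have hV : ∀ t, 0 ≤ t → M t + c * F t ≤ (M 0 + c * F 0) * exp (-(ε * t)) :=
    fun t ht => le_mul_exp_neg_of_hasDerivAt_le hderiv (fun s hs => weighted_sum_deriv_le hr0.le
      hr1.le hρ.le (by linarith) (hMnn s hs) (hFnn s hs)
      (saturated_incidence_le hk0 hβ.le (hMnn s hs) (hFnn s hs) (hMSk s hs)) hεM hcε) ht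
  have hV0 : 0 ≤ M 0 + c * F 0 := by nlinarith [hMnn 0 le_rfl, hFnn 0 le_rfl]
  refine ⟨M 0 + c * F 0 + 1, by linarith, ε, hε, fun t ht => ?_⟩
  nlinarith [hV t ht, hFnn t ht, exp_pos (-(ε * t))]

theorem stmt_11 (r ρ β μM μF γ : ℝ)
    (hr0 : 0 < r) (hr1 : r < 1) (hρ : 0 < ρ) (hβ : 0 < β)
    (hμM : 0 < μM) (hμF : 0 < μF) (hγ : 0 < γ) (hμ : μF ≤ μM)
    (k : ℝ) (hk0 : 0 < k) (hk1 : k < 1 / ((1 - r) * ρ / μF))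
    (M F MS : ℝ → ℝ)
    (hMSc : Continuous MS) (hMSnn : ∀ t, 0 ≤ t → 0 ≤ MS t)
    (hMSk : ∀ t, 0 ≤ t → γ * MS t ≥ (1 / k - 1) * M t)
    (hMnn : ∀ t, 0 ≤ t → 0 ≤ M t) (hFnn : ∀ t, 0 ≤ t → 0 ≤ F t)
    (hdM : ∀ t, 0 ≤ t →
      HasDerivAt M (r * ρ * (F t * M t / (M t + γ * MS t)) *
        Real.exp (-(β * (M t + F t))) - μM * M t) t)
    (hdF : ∀ t, 0 ≤ t →
      HasDerivAt F ((1 - r) * ρ * (F t * M t / (M t + γ * MS t)) *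
        Real.exp (-(β * (M t + F t))) - μF * F t) t) :
    ∃ C > 0, ∃ ε > 0, ∀ t, 0 ≤ t → M t + F t ≤ C * Real.exp (-(ε * t)) :=
  stmt_11_general r ρ β μM μF γ hr0 hr1 hρ hβ hμM hμF k hk0 hk1 M F MS hMSk hMnn hFnn hdM hdF
end
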